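/- arXiv:2603.01206 — 18 statements merged into one kernel-verified Lean document; each statement's English description precedes it below -/
import Mathlib

section
/- Let ℓ ≥ 1 and let s(1), …, s(ℓ) be integers with s(j) ≥ 1 for all 1 ≤ j ≤ ℓ, and suppose that for every 1 ≤ j ≤ ℓ−1 we have s(j) + s(j+1) ≥ s(1) + ⋯ + s(j−1) (the empty sum for j = 1 being 0). Then, writing n = s(1) + ⋯ + s(ℓ), we have ℓ ≤ 2·log₂(n) + 1; equivalently, 2^(ℓ−1) ≤ n². -/
/-- Lemma 3.1 ("rule (C) implies invariant (S)") for lazy partition heaps: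
if all set sizes are at least 1 and every two adjacent sets together contain
at least as many elements as all preceding sets, then `2^(ℓ-1) ≤ n²`
(equivalently, `ℓ ≤ 2 log₂ n + 1`). -/
theorem lp_heap_logarithmic_set_count (ℓ : ℕ) (hℓ : 1 ≤ ℓ) (s : ℕ → ℤ)
    (hs : ∀ j, 1 ≤ j → j ≤ ℓ → 1 ≤ s j)
    (hC : ∀ j, 1 ≤ j → j ≤ ℓ - 1 →
      (∑ t ∈ Finset.Icc 1 (j - 1), s t) ≤ s j + s (j + 1)) :
    (2 : ℤ) ^ (ℓ - 1) ≤ (∑ t ∈ Finset.Icc 1 ℓ, s t) ^ 2 := by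
  -- prefix sums are at least j
  have hP : ∀ j, 1 ≤ j → j ≤ ℓ → (j : ℤ) ≤ ∑ t ∈ Finset.Icc 1 j, s t := by
    intro j h1 h2
    calc (j : ℤ) = ∑ _t ∈ Finset.Icc 1 j, (1 : ℤ) := by
          simp [Nat.Icc_eq_range', Finset.sum_const]
      _ ≤ ∑ t ∈ Finset.Icc 1 j, s t := by
          apply Finset.sum_le_sum
          intro t ht
          rw [Finset.mem_Icc] at ht
          exact hs t ht.1 (ht.2.trans h2)
  have key : ∀ j, 1 ≤ j → j ≤ ℓ → (2 : ℤ) ^ (j - 1) ≤ (∑ t ∈ Finset.Icc 1 j, s t) ^ 2 := by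
    intro j
    induction j using Nat.strong_induction_on with
    | _ j ih =>
      intro h1 h2
      match j, h1 with
      | 1, _ =>
        have h := hP 1 le_rfl h2
        push_cast at h
        simp only [Finset.Icc_self, Finset.sum_singleton] at h ⊢
        have e : (2:ℤ)^(1-1) = 1 := rfl
        rw [e]
        nlinarith [h]
      | 2, _ =>
        have h := hP 2 (by omega) h2
        push_cast at h
        norm_num
        nlinarith [h]
      | (k+3), _ =>
        have hk1 : k + 1 ≤ ℓ := by omega
        have hih : (2 : ℤ) ^ k ≤ (∑ t ∈ Finset.Icc 1 (k+1), s t) ^ 2 := by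
          have := ih (k+1) (by omega) (by omega) hk1
          simpa using this
        have hPk : ((k : ℤ) + 1) ≤ ∑ t ∈ Finset.Icc 1 (k+1), s t := by
          have := hP (k+1) (by omega) hk1
          push_cast at this ⊢
          linarith
        have hCk : (∑ t ∈ Finset.Icc 1 (k+1), s t) ≤ s (k+2) + s (k+3) := by
          have := hC (k+2) (by omega) (by omega)
          simpa using this
        have hsplit : (∑ t ∈ Finset.Icc 1 (k+3), s t)
            = (∑ t ∈ Finset.Icc 1 (k+1), s t) + s (k+2) + s (k+3) := by
          rw [Finset.sum_Icc_succ_top (by omega : 1 ≤ k+3),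
              Finset.sum_Icc_succ_top (by omega : 1 ≤ k+2)]
        have hgoal : (2 : ℤ) ^ (k+2) ≤ (∑ t ∈ Finset.Icc 1 (k+3), s t) ^ 2 := by
          set P := ∑ t ∈ Finset.Icc 1 (k+1), s t with hPdef
          have hP1 : (1 : ℤ) ≤ P := by
            have : (0:ℤ) ≤ (k:ℤ) := Int.ofNat_nonneg k
            linarith
          have h2P : 2 * P ≤ ∑ t ∈ Finset.Icc 1 (k+3), s t := by
            rw [hsplit]; linarith
          calc (2:ℤ) ^ (k+2) = 4 * 2 ^ k := by ring
            _ ≤ 4 * P ^ 2 := by linarith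
            _ = (2 * P) ^ 2 := by ring
            _ ≤ (∑ t ∈ Finset.Icc 1 (k+3), s t) ^ 2 := by
                apply pow_le_pow_left₀ (by linarith) h2P
        simpa using hgoal
  exact key ℓ hℓ le_rfl
end

section
/- Let ℓ ≥ 1 and let s(1), …, s(ℓ) be integers with s(j) ≥ 1 for all 1 ≤ j ≤ ℓ, and suppose that for every 1 ≤ j ≤ ℓ−1 we have s(j) + s(j+1) ≥ s(1) + ⋯ + s(j−1). Then for every 1 ≤ j ≤ ℓ, the prefix sum Σ(j) = s(1) + ⋯ + s(j) satisfies Σ(j) ≥ 2^((j−1)/2); equivalently, Σ(j)² ≥ 2^(j−1). -/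
/-- Claim (*) inside Lemma 3.1: prefixes of set sizes in a lazy partition heap
grow exponentially: `Σ(j) ≥ 2^((j-1)/2)`, equivalently `Σ(j)² ≥ 2^(j-1)`. -/
theorem lp_heap_prefix_growth (ℓ : ℕ) (hℓ : 1 ≤ ℓ) (s : ℕ → ℤ)
    (hs : ∀ j, 1 ≤ j → j ≤ ℓ → 1 ≤ s j)
    (hC : ∀ j, 1 ≤ j → j ≤ ℓ - 1 →
      (∑ t ∈ Finset.Icc 1 (j - 1), s t) ≤ s j + s (j + 1)) :
    ∀ j, 1 ≤ j → j ≤ ℓ →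
      (2 : ℤ) ^ (j - 1) ≤ (∑ t ∈ Finset.Icc 1 j, s t) ^ 2 := by
  -- prefix sums are at least j
  have hpos : ∀ j, j ≤ ℓ → (j : ℤ) ≤ ∑ t ∈ Finset.Icc 1 j, s t := by
    intro j hj
    calc (j : ℤ) = ∑ t ∈ Finset.Icc 1 j, (1 : ℤ) := by
          simp [Nat.card_Icc]
      _ ≤ ∑ t ∈ Finset.Icc 1 j, s t := by
          apply Finset.sum_le_sum
          intro t ht
          simp only [Finset.mem_Icc] at ht
          exact hs t ht.1 (le_trans ht.2 hj)
  intro j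
  induction j using Nat.strong_induction_on with
  | _ j ih =>
    intro hj1 hjℓ
    rcases j with _ | _ | _ | k
    · omega
    · -- j = 1
      have h1 : (1 : ℤ) ≤ ∑ t ∈ Finset.Icc 1 1, s t := by
        have := hpos 1 hjℓ; exact_mod_cast this
      have : (1:ℤ) ≤ (∑ t ∈ Finset.Icc 1 1, s t) ^ 2 := by nlinarith
      simpa using this
    · -- j = 2
      have h2 : (2 : ℤ) ≤ ∑ t ∈ Finset.Icc 1 2, s t := by
        have := hpos 2 hjℓ; exact_mod_cast this
      have : (2:ℤ) ^ (2 - 1) = 2 := by norm_num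
      rw [show (2 : ℕ) - 1 = 1 from rfl]
      nlinarith
    · -- j = k + 3
      set m := k + 1 with hm
      have hm1 : 1 ≤ m := by omega
      have hmℓ : m ≤ ℓ := by omega
      have hIH : (2 : ℤ) ^ (m - 1) ≤ (∑ t ∈ Finset.Icc 1 m, s t) ^ 2 :=
        ih m (by omega) hm1 hmℓ
      have hCm : (∑ t ∈ Finset.Icc 1 m, s t) ≤ s (m + 1) + s (m + 2) := by
        have := hC (m + 1) (by omega) (by omega)
        simpa using this
      have hsplit : (∑ t ∈ Finset.Icc 1 (m + 2), s t)
          = (∑ t ∈ Finset.Icc 1 m, s t) + s (m + 1) + s (m + 2) := by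
        rw [Finset.sum_Icc_succ_top (by omega), Finset.sum_Icc_succ_top (by omega)]
      have hSk : (m : ℤ) ≤ ∑ t ∈ Finset.Icc 1 m, s t := hpos m hmℓ
      have hSknn : (0 : ℤ) ≤ ∑ t ∈ Finset.Icc 1 m, s t := by
        have : (0 : ℤ) ≤ (m : ℤ) := by positivity
        linarith
      have hdouble : 2 * (∑ t ∈ Finset.Icc 1 m, s t)
          ≤ ∑ t ∈ Finset.Icc 1 (m + 2), s t := by
        rw [hsplit]; linarith
      have hsq : 4 * (∑ t ∈ Finset.Icc 1 m, s t) ^ 2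
          ≤ (∑ t ∈ Finset.Icc 1 (m + 2), s t) ^ 2 := by
        nlinarith
      have hexp : m + 2 - 1 = (m - 1) + 2 := by omega
      have hgoal : k + 3 = m + 2 := by omega
      rw [hgoal, hexp, pow_add]
      calc (2 : ℤ) ^ (m - 1) * 2 ^ 2 = 4 * 2 ^ (m - 1) := by ring
        _ ≤ 4 * (∑ t ∈ Finset.Icc 1 m, s t) ^ 2 := by linarith
        _ ≤ _ := hsq
end

section
/- Let β ≥ 2 be an integer, let ℓ ≥ 1, and let s(1), …, s(ℓ) be natural numbers with s(1) ≥ 1. Define out(j) = s(1) + ⋯ + s(j−1) and Φ = β · Σ_{j=1}^{ℓ} max(0, s(j) − out(j)). Let a and b be natural numbers with a + b = s(1) − 1, b ≤ a, and 2a ≤ s(1). Let the new sequence be s' = (a, b, s(2), …, s(ℓ)) of length ℓ+1, with out'(j) and Φ' = β · Σ_{j=1}^{ℓ+1} max(0, s'(j) − out'(j)) defined analogously. Then 2(Φ' − Φ) ≤ β·(2ℓ − s(1)). -/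
/-- The number of elements smaller than all elements of set `j`. -/
def lpOut (s : ℕ → ℕ) (j : ℕ) : ℤ := ∑ m ∈ Finset.Icc 1 (j - 1), (s m : ℤ)

/-- The potential of a lazy partition heap with `L` sets of sizes `s 1, …, s L`. -/
def lpPot (β : ℤ) (s : ℕ → ℕ) (L : ℕ) : ℤ :=
  β * ∑ j ∈ Finset.Icc 1 L, max 0 ((s j : ℤ) - lpOut s j)

private lemma lp_sum1 (t : ℕ → ℤ) (n : ℕ) (hn : 1 ≤ n) :
    ∑ j ∈ Finset.Icc 1 n, t j = t 1 + ∑ j ∈ Finset.Icc 2 n, t j := by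
  have h : Finset.Icc 1 n = insert 1 (Finset.Icc 2 n) := by
    ext x; simp only [Finset.mem_Icc, Finset.mem_insert]; omega
  rw [h, Finset.sum_insert (by simp)]

private lemma lp_sum2 (t : ℕ → ℤ) (n : ℕ) (hn : 2 ≤ n) :
    ∑ j ∈ Finset.Icc 2 n, t j = t 2 + ∑ j ∈ Finset.Icc 3 n, t j := by
  have h : Finset.Icc 2 n = insert 2 (Finset.Icc 3 n) := by
    ext x; simp only [Finset.mem_Icc, Finset.mem_insert]; omega
  rw [h, Finset.sum_insert (by simp)]

private lemma lp_shift (t : ℕ → ℤ) (k n : ℕ) :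
    ∑ j ∈ Finset.Icc (k+1) (n+1), t j = ∑ j ∈ Finset.Icc k n, t (j+1) := by
  rw [← Finset.map_add_right_Icc k n 1, Finset.sum_map]
  rfl

/-- Potential-change bound for Delete-Min in lazy partition heaps:
after removing the minimum from `S₁` (leaving `s 1 - 1` elements) and partitioning
it around its larger median into parts of sizes `a` and `b`, we have
`ΔΦ ≤ β·ℓ − β·s(1)/2`, i.e. `2(Φ' − Φ) ≤ β·(2ℓ − s(1))`. -/
theorem lp_heap_delete_min_potential (β : ℤ) (hβ : 2 ≤ β) (ℓ : ℕ) (hℓ : 1 ≤ ℓ)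
    (s : ℕ → ℕ) (hs1 : 1 ≤ s 1)
    (a b : ℕ) (hab : a + b = s 1 - 1) (hba : b ≤ a) (h2a : 2 * a ≤ s 1)
    (s' : ℕ → ℕ)
    (hs' : ∀ j, s' j = if j = 1 then a else if j = 2 then b else s (j - 1)) :
    2 * (lpPot β s' (ℓ + 1) - lpPot β s ℓ) ≤ β * (2 * (ℓ : ℤ) - (s 1 : ℤ)) := by
  have habz : (a : ℤ) + (b : ℤ) = (s 1 : ℤ) - 1 := by omega
  set G : ℕ → ℤ := fun j => max 0 ((s' j : ℤ) - lpOut s' j) with hG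
  set F : ℕ → ℤ := fun j => max 0 ((s j : ℤ) - lpOut s j) with hF
  -- values of lpOut
  have hout1' : lpOut s' 1 = 0 := by simp [lpOut]
  have hout2' : lpOut s' 2 = (a : ℤ) := by simp [lpOut, hs']
  have hout1 : lpOut s 1 = 0 := by simp [lpOut]
  have houtshift : ∀ j, 2 ≤ j → lpOut s' (j + 1) = lpOut s j - 1 := by
    intro j hj
    obtain ⟨k, rfl⟩ : ∃ k, j = k + 1 := ⟨j - 1, by omega⟩
    have hk : 1 ≤ k := by omega
    unfold lpOut
    have e1 : (k + 1 + 1) - 1 = k + 1 := rfl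
    have e2 : (k + 1) - 1 = k := rfl
    rw [e1, e2, lp_sum1 _ (k+1) (by omega), lp_sum2 _ (k+1) (by omega),
        lp_sum1 (fun m => ((s m : ℕ) : ℤ)) k hk,
        show (3:ℕ) = 2 + 1 from rfl, lp_shift]
    have e3 : ∀ m ∈ Finset.Icc 2 k, ((s' (m+1) : ℤ)) = ((s m : ℤ)) := by
      intro m hm
      simp only [Finset.mem_Icc] at hm
      rw [hs' (m+1)]
      have h1 : m + 1 ≠ 1 := by omega
      have h2 : m + 1 ≠ 2 := by omega
      rw [if_neg h1, if_neg h2]; simp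
    rw [Finset.sum_congr rfl e3, hs' 1, hs' 2]
    simp only [if_pos rfl, if_neg (by norm_num : (2:ℕ) ≠ 1)]
    push_cast
    linarith [habz]
  -- values of terms
  have hG1 : G 1 = (a : ℤ) := by
    simp only [hG, hout1', hs' 1]
    simp
  have hG2 : G 2 = 0 := by
    simp only [hG, hout2', hs' 2]
    simp only [if_neg (by norm_num : (2:ℕ) ≠ 1), if_pos rfl]
    have hba' : (b : ℤ) ≤ (a : ℤ) := by exact_mod_cast hba
    simp [max_eq_left (sub_nonpos.mpr hba')]
  have hF1 : F 1 = (s 1 : ℤ) := by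
    simp only [hF, hout1]
    simp
  -- pointwise bound
  have hpt : ∀ j ∈ Finset.Icc 2 ℓ, G (j + 1) ≤ F j + 1 := by
    intro j hj
    simp only [Finset.mem_Icc] at hj
    have hsj : s' (j + 1) = s j := by
      rw [hs' (j+1)]
      have h1 : j + 1 ≠ 1 := by omega
      have h2 : j + 1 ≠ 2 := by omega
      rw [if_neg h1, if_neg h2]; simp
    simp only [hG, hF, hsj, houtshift j hj.1]
    rcases le_total ((s j : ℤ) - lpOut s j) 0 with h | h
    · have : (s j : ℤ) - (lpOut s j - 1) ≤ 1 := by linarith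
      have h0 : max 0 ((s j : ℤ) - lpOut s j) = 0 := max_eq_left h
      rw [h0]
      exact max_le (by norm_num) this
    · have h0 : max 0 ((s j : ℤ) - lpOut s j) = (s j : ℤ) - lpOut s j := max_eq_right h
      rw [h0]
      exact max_le (by linarith) (by linarith)
  -- sum splits
  have hT : ∑ j ∈ Finset.Icc 1 (ℓ+1), G j
      = G 1 + (G 2 + ∑ j ∈ Finset.Icc 2 ℓ, G (j+1)) := by
    rw [lp_sum1 G (ℓ+1) (by omega), lp_sum2 G (ℓ+1) (by omega),
        show (3:ℕ) = 2 + 1 from rfl, lp_shift]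
  have hS : ∑ j ∈ Finset.Icc 1 ℓ, F j = F 1 + ∑ j ∈ Finset.Icc 2 ℓ, F j :=
    lp_sum1 F ℓ hℓ
  have hcard : (Finset.Icc 2 ℓ).card = ℓ - 1 := by
    rw [Nat.card_Icc]; omega
  have hsum_le : ∑ j ∈ Finset.Icc 2 ℓ, G (j+1)
      ≤ (∑ j ∈ Finset.Icc 2 ℓ, F j) + ((ℓ : ℤ) - 1) := by
    have := Finset.sum_le_sum hpt
    rw [Finset.sum_add_distrib, Finset.sum_const, hcard] at this
    simp only [nsmul_eq_mul, mul_one] at this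
    have hc : ((ℓ - 1 : ℕ) : ℤ) = (ℓ : ℤ) - 1 := by omega
    linarith
  -- combine
  have key : (∑ j ∈ Finset.Icc 1 (ℓ+1), G j) - (∑ j ∈ Finset.Icc 1 ℓ, F j)
      ≤ (a : ℤ) - (s 1 : ℤ) + ((ℓ : ℤ) - 1) := by
    rw [hT, hS, hG1, hG2, hF1]
    linarith
  unfold lpPot
  rw [← hG, ← hF]
  have h2az : 2 * (a : ℤ) ≤ (s 1 : ℤ) := by exact_mod_cast h2a
  nlinarith [key, hβ, h2az]
end

section
/- Let F denote the Fibonacci numbers (F(0)=0, F(1)=F(2)=1, F(i)=F(i−1)+F(i−2)), and for an index m ≥ 1 and a positive natural number x define the size potential ψ_m(x) = max(0, F(m+1) − x) + max(0, x − F(m+2)), with ψ_m(0) = 0. Then for every i ≥ 3, every j ∈ {0, 1, 2}, and every natural number s with F(i+j) ≤ s ≤ F(i+j+1), there exist natural numbers a and b with a + b = s, F(i+j−1) ≤ a ≤ F(i+j), F(i+j−2) ≤ b ≤ F(i+j−1), and ψ_{i−1}(a) + ψ_{i−2}(b) ≤ ψ_i(s). -/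
/-- The size potential `ψ_m(x)` of a set at index `m` with `x` elements:
`ψ_m(0) = 0` and `ψ_m(x) = max(0, F(m+1) − x) + max(0, x − F(m+2))` for `x > 0`
(natural-number subtraction is truncated, so `a - b` equals `max(0, a - b)`). -/
def sizePot (m x : ℕ) : ℕ :=
  if x = 0 then 0 else (Nat.fib (m + 1) - x) + (x - Nat.fib (m + 2))

lemma sizePot_of_ne (m x : ℕ) (hx : x ≠ 0) :
    sizePot m x = (Nat.fib (m + 1) - x) + (x - Nat.fib (m + 2)) := if_neg hx

/-- The splitting direction of Fact 4.7: a set `S_i` with `F(i+j) ≤ s ≤ F(i+j+1)`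
elements (`j ∈ {0,1,2}`) can be proportionally split into sets of sizes `a` and `b`
for `S_{i-1}` and `S_{i-2}` without increasing the size potential. -/
theorem fhtng_fact_split (i j : ℕ) (hi : 3 ≤ i) (hj : j ≤ 2) (s : ℕ)
    (h1 : Nat.fib (i + j) ≤ s) (h2 : s ≤ Nat.fib (i + j + 1)) :
    ∃ a b, a + b = s ∧
      Nat.fib (i + j - 1) ≤ a ∧ a ≤ Nat.fib (i + j) ∧
      Nat.fib (i + j - 2) ≤ b ∧ b ≤ Nat.fib (i + j - 1) ∧
      sizePot (i - 1) a + sizePot (i - 2) b ≤ sizePot i s := by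
  obtain ⟨n, rfl⟩ : ∃ n, i = n + 3 := ⟨i - 3, by omega⟩
  have f1 : Nat.fib (n + 3) = Nat.fib (n + 1) + Nat.fib (n + 2) := Nat.fib_add_two
  have f2 : Nat.fib (n + 4) = Nat.fib (n + 2) + Nat.fib (n + 3) := Nat.fib_add_two
  have f3 : Nat.fib (n + 5) = Nat.fib (n + 3) + Nat.fib (n + 4) := Nat.fib_add_two
  have f4 : Nat.fib (n + 6) = Nat.fib (n + 4) + Nat.fib (n + 5) := Nat.fib_add_two
  have p1 : 0 < Nat.fib (n + 1) := Nat.fib_pos.mpr (by omega)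
  interval_cases j <;>
  [ (refine ⟨min (s - Nat.fib (n + 1)) (Nat.fib (n + 3)),
      s - min (s - Nat.fib (n + 1)) (Nat.fib (n + 3)), ?_⟩;
     simp only [show n + 3 + 0 = n + 3 from rfl, show n + 3 + 0 + 1 = n + 4 from rfl,
       show n + 3 + 0 - 1 = n + 2 from rfl, show n + 3 + 0 - 2 = n + 1 from rfl] at *);
    (refine ⟨min (s - Nat.fib (n + 2)) (Nat.fib (n + 4)),
      s - min (s - Nat.fib (n + 2)) (Nat.fib (n + 4)), ?_⟩;
     simp only [show n + 3 + 1 = n + 4 from rfl, show n + 3 + 1 + 1 = n + 5 from rfl,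
       show n + 3 + 1 - 1 = n + 3 from rfl, show n + 3 + 1 - 2 = n + 2 from rfl] at *);
    (refine ⟨min (s - Nat.fib (n + 3)) (Nat.fib (n + 5)),
      s - min (s - Nat.fib (n + 3)) (Nat.fib (n + 5)), ?_⟩;
     simp only [show n + 3 + 2 = n + 5 from rfl, show n + 3 + 2 + 1 = n + 6 from rfl,
       show n + 3 + 2 - 1 = n + 4 from rfl, show n + 3 + 2 - 2 = n + 3 from rfl] at *)] <;>
  · have hmono := Nat.fib_mono (show n + 1 ≤ n + 2 by omega)
    have hmono2 := Nat.fib_mono (show n + 2 ≤ n + 3 by omega)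
    have hmono3 := Nat.fib_mono (show n + 3 ≤ n + 4 by omega)
    refine ⟨by omega, by omega, by omega, by omega, by omega, ?_⟩
    rw [sizePot_of_ne _ _ (by omega), sizePot_of_ne _ _ (by omega),
        sizePot_of_ne _ _ (by omega)]
    simp only [show n + 3 - 1 = n + 2 from rfl, show n + 3 - 2 = n + 1 from rfl,
      show n + 2 + 1 = n + 3 from rfl, show n + 2 + 2 = n + 4 from rfl,
      show n + 1 + 1 = n + 2 from rfl, show n + 1 + 2 = n + 3 from rfl,
      show n + 3 + 1 = n + 4 from rfl, show n + 3 + 2 = n + 5 from rfl]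
    omega
end

section
/- Let F denote the Fibonacci numbers (F(0)=0, F(1)=F(2)=1, F(i)=F(i−1)+F(i−2)), and for an index m ≥ 1 and a positive natural number x define the size potential ψ_m(x) = max(0, F(m+1) − x) + max(0, x − F(m+2)), with ψ_m(0) = 0. Then for every i ≥ 3 and all natural numbers a, b with F(i−1) ≤ a ≤ F(i+2) and F(i−2) ≤ b ≤ F(i+1), we have ψ_i(a + b) ≤ ψ_{i−1}(a) + ψ_{i−2}(b). -/
/-- The merging direction of Fact 4.7: concatenating nonempty sets `S_{i-1}` and
`S_{i-2}` (of sizes `a`, `b` obeying their size invariants) into the previously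
empty set `S_i` does not increase the size potential. -/
theorem fhtng_fact_merge (i : ℕ) (hi : 3 ≤ i) (a b : ℕ)
    (ha1 : Nat.fib (i - 1) ≤ a) (ha2 : a ≤ Nat.fib (i + 2))
    (hb1 : Nat.fib (i - 2) ≤ b) (hb2 : b ≤ Nat.fib (i + 1)) :
    sizePot i (a + b) ≤ sizePot (i - 1) a + sizePot (i - 2) b := by
  obtain ⟨k, rfl⟩ : ∃ k, i = k + 3 := ⟨i - 3, by omega⟩
  simp only [show k + 3 - 1 = k + 2 from rfl, show k + 3 - 2 = k + 1 from rfl] at *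
  have h1 : Nat.fib (k + 2) = Nat.fib k + Nat.fib (k + 1) := Nat.fib_add_two
  have h2 : Nat.fib (k + 3) = Nat.fib (k + 1) + Nat.fib (k + 2) := Nat.fib_add_two
  have h3 : Nat.fib (k + 4) = Nat.fib (k + 2) + Nat.fib (k + 3) := Nat.fib_add_two
  have h4 : Nat.fib (k + 5) = Nat.fib (k + 3) + Nat.fib (k + 4) := Nat.fib_add_two
  have h5 : 1 ≤ Nat.fib (k + 1) := Nat.fib_pos.2 (by omega)
  unfold sizePot
  simp only [show k + 1 + 2 = k + 3 from rfl, show k + 2 + 2 = k + 4 from rfl,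
    show k + 2 + 1 = k + 3 from rfl, show k + 1 + 1 = k + 2 from rfl,
    show k + 3 + 1 = k + 4 from rfl, show k + 3 + 2 = k + 5 from rfl]
  split <;> split <;> split <;> omega
end

section
/- Let i ≥ 11 and k ≥ i. Let s(1), …, s(k) be natural numbers with s(i) > 0, s(i−9) = s(i−8) = ⋯ = s(i−1) = 0, and s(j) ≤ F(j+3) for all 1 ≤ j ≤ i−10. Let a, b be natural numbers with a + b = s(i), a ≥ F(i−2), b ≥ F(i−1), and ψ_{i−2}(a) + ψ_{i−1}(b) ≤ ψ_i(s(i)). Let s̄ agree with s everywhere except s̄(i−2) = a, s̄(i−1) = b, s̄(i) = 0. Then F(i−6) + Φ(s̄) ≤ Φ(s). -/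
/-- The up potential `φup_i`: zero if `i ≤ 2` or `S_i` is empty, and otherwise
`max(0, F(i−3) − (s(1)+⋯+s(i−1)))` (natural-number subtraction is truncated). -/
def upPot (s : ℕ → ℕ) (i : ℕ) : ℕ :=
  if i ≤ 2 ∨ s i = 0 then 0
  else Nat.fib (i - 3) - ∑ j ∈ Finset.Icc 1 (i - 1), s j

/-- The nonempty potential `φne_i`: `1` if `S_i` is nonempty, else `0`. -/
def nePot (s : ℕ → ℕ) (i : ℕ) : ℕ := if s i = 0 then 0 else 1

/-- The total potential of a next generation Fibonacci heap with `k` set slots. -/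
def fhtngPot (s : ℕ → ℕ) (k : ℕ) : ℕ :=
  ∑ i ∈ Finset.Icc 1 k, (upPot s i + sizePot i (s i) + nePot s i)

/-- The split-up lemma (Lemma 4.1): when the sets `S_{i-9}, …, S_{i-1}` are all
empty and `S_i` is nonempty, splitting `S_i` proportionally into `S_{i-2}` and
`S_{i-1}` has amortized cost at most 0 at nominal cost `F(i-6)`. -/
theorem fhtng_split_up (i k : ℕ) (hi : 11 ≤ i) (hik : i ≤ k) (s : ℕ → ℕ)
    (hne : 0 < s i)
    (hempty : ∀ j, i - 9 ≤ j → j ≤ i - 1 → s j = 0)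
    (hsize : ∀ j, 1 ≤ j → j ≤ i - 10 → s j ≤ Nat.fib (j + 3))
    (a b : ℕ) (hab : a + b = s i)
    (ha : Nat.fib (i - 2) ≤ a) (hb : Nat.fib (i - 1) ≤ b)
    (hψ : sizePot (i - 2) a + sizePot (i - 1) b ≤ sizePot i (s i))
    (s' : ℕ → ℕ)
    (hs' : ∀ j, s' j =
      if j = i - 2 then a else if j = i - 1 then b else if j = i then 0 else s j) :
    Nat.fib (i - 6) + fhtngPot s' k ≤ fhtngPot s k := by
  --

  obtain ⟨m, rfl⟩ : ∃ m, i = m + 11 := ⟨i - 11, by omega⟩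
  have hempty' : ∀ j, m + 2 ≤ j → j ≤ m + 10 → s j = 0 := fun j h1 h2 =>
    hempty j (by omega) (by omega)
  have hsize' : ∀ j, 1 ≤ j → j ≤ m + 1 → s j ≤ Nat.fib (j + 3) := fun j h1 h2 =>
    hsize j h1 (by omega)
  have ha' : Nat.fib (m + 9) ≤ a := ha
  have hb' : Nat.fib (m + 10) ≤ b := hb
  have hψ' : sizePot (m + 9) a + sizePot (m + 10) b ≤ sizePot (m + 11) (s (m + 11)) := hψ
  have hane : a ≠ 0 := by
    have := Nat.fib_pos.mpr (show 0 < m + 9 by omega); omega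
  have hbne : b ≠ 0 := by
    have := Nat.fib_pos.mpr (show 0 < m + 10 by omega); omega
  have hsm9 : s' (m + 9) = a := by rw [hs']; simp
  have hsm10 : s' (m + 10) = b := by
    rw [hs', if_neg (by omega), if_pos (show m + 10 = m + 11 - 1 by omega)]
  have hsm11 : s' (m + 11) = 0 := by
    rw [hs', if_neg (by omega), if_neg (by omega), if_pos rfl]
  have hss : ∀ j, j ≤ m + 8 → s' j = s j := fun j h => by
    rw [hs', if_neg (by omega), if_neg (by omega), if_neg (by omega)]
  have hss2 : ∀ j, m + 12 ≤ j → s' j = s j := fun j h => by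
    rw [hs', if_neg (by omega), if_neg (by omega), if_neg (by omega)]
  set T := ∑ j ∈ Finset.Icc 1 (m + 1), s j with hTdef
  have hfib_sum : ∀ n : ℕ, (∑ j ∈ Finset.Icc 1 (n + 1), Nat.fib (j + 3)) + 5 = Nat.fib (n + 6) := by
    intro n
    induction n with
    | zero => decide
    | succ n ih =>
      rw [Finset.sum_Icc_succ_top (by omega), show n + 1 + 1 + 3 = n + 5 from by omega,
        show n + 1 + 6 = n + 7 from rfl]
      have h7 : Nat.fib (n + 7) = Nat.fib (n + 5) + Nat.fib (n + 6) := by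
        rw [show n + 7 = n + 5 + 2 from rfl, Nat.fib_add_two, show n + 5 + 1 = n + 6 from rfl]
      omega
  have hT : T + 5 ≤ Nat.fib (m + 6) := by
    have h1 : T ≤ ∑ j ∈ Finset.Icc 1 (m + 1), Nat.fib (j + 3) :=
      Finset.sum_le_sum fun j hj => by
        have := Finset.mem_Icc.mp hj
        exact hsize' j this.1 this.2
    have := hfib_sum m
    omega
  have hPs : ∀ n, m + 1 ≤ n → n ≤ m + 10 → ∑ j ∈ Finset.Icc 1 n, s j = T := by
    intro n h1 h2
    induction n with
    | zero => omega
    | succ n ih =>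
      rcases Nat.eq_or_lt_of_le h1 with h | h
      · rw [← h]
      · rw [Finset.sum_Icc_succ_top (by omega), hempty' (n + 1) (by omega) (by omega),
          ih (by omega) (by omega)]
        omega
  have hP8' : ∑ j ∈ Finset.Icc 1 (m + 8), s' j = T := by
    calc ∑ j ∈ Finset.Icc 1 (m + 8), s' j = ∑ j ∈ Finset.Icc 1 (m + 8), s j :=
          Finset.sum_congr rfl fun x hx => hss x (by have := Finset.mem_Icc.mp hx; omega)
      _ = T := hPs (m + 8) (by omega) (by omega)
  have hP9' : ∑ j ∈ Finset.Icc 1 (m + 9), s' j = T + a := by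
    rw [Finset.sum_Icc_succ_top (by omega), hP8', hsm9]
  have hP10' : ∑ j ∈ Finset.Icc 1 (m + 10), s' j = T + a + b := by
    rw [Finset.sum_Icc_succ_top (by omega), hP9', hsm10]
  have hP11eq : ∑ j ∈ Finset.Icc 1 (m + 11), s' j = ∑ j ∈ Finset.Icc 1 (m + 11), s j := by
    rw [Finset.sum_Icc_succ_top (by omega), Finset.sum_Icc_succ_top (by omega) s, hP10',
      show m + 10 + 1 = m + 11 from rfl, hsm11, hPs (m + 10) (by omega) (by omega)]
    omega
  have hPn : ∀ n, m + 11 ≤ n → ∑ j ∈ Finset.Icc 1 n, s' j = ∑ j ∈ Finset.Icc 1 n, s j := by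
    intro n hn
    induction n with
    | zero => omega
    | succ n ih =>
      rcases Nat.eq_or_lt_of_le hn with h | h
      · rw [← h]; exact hP11eq
      · rw [Finset.sum_Icc_succ_top (by omega), Finset.sum_Icc_succ_top (by omega) s,
          ih (by omega), hss2 (n + 1) (by omega)]
  -- termwise equality below the action
  have hterm_low : ∀ j ∈ Finset.Icc 1 (m + 8),
      upPot s' j + sizePot j (s' j) + nePot s' j = upPot s j + sizePot j (s j) + nePot s j := by
    intro j hj
    have hj' := Finset.mem_Icc.mp hj
    have h1 : s' j = s j := hss j hj'.2
    have h2 : ∑ x ∈ Finset.Icc 1 (j - 1), s' x = ∑ x ∈ Finset.Icc 1 (j - 1), s x :=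
      Finset.sum_congr rfl fun x hx => hss x (by have := Finset.mem_Icc.mp hx; omega)
    simp [upPot, nePot, h1, h2]
  have hterm_high : ∀ j ∈ Finset.Icc (m + 12) k,
      upPot s' j + sizePot j (s' j) + nePot s' j = upPot s j + sizePot j (s j) + nePot s j := by
    intro j hj
    have hj' := Finset.mem_Icc.mp hj
    have h1 : s' j = s j := hss2 j hj'.1
    have h2 : ∑ x ∈ Finset.Icc 1 (j - 1), s' x = ∑ x ∈ Finset.Icc 1 (j - 1), s x :=
      hPn (j - 1) (by omega)
    simp [upPot, nePot, h1, h2]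
  -- middle values
  have F9 : upPot s (m + 9) + sizePot (m + 9) (s (m + 9)) + nePot s (m + 9) = 0 := by
    simp [upPot, sizePot, nePot, hempty' (m + 9) (by omega) (by omega)]
  have F10 : upPot s (m + 10) + sizePot (m + 10) (s (m + 10)) + nePot s (m + 10) = 0 := by
    simp [upPot, sizePot, nePot, hempty' (m + 10) (by omega) (by omega)]
  have G11 : upPot s' (m + 11) + sizePot (m + 11) (s' (m + 11)) + nePot s' (m + 11) = 0 := by
    simp [upPot, sizePot, nePot, hsm11]
  have hup11 : upPot s (m + 11) = Nat.fib (m + 8) - T := by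
    simp only [upPot]
    rw [if_neg (by push_neg; exact ⟨by omega, hne.ne'⟩)]
    show Nat.fib (m + 8) - ∑ j ∈ Finset.Icc 1 (m + 10), s j = _
    rw [hPs (m + 10) (by omega) (by omega)]
  have hne11 : nePot s (m + 11) = 1 := by simp [nePot, hne.ne']
  have hup9' : upPot s' (m + 9) = Nat.fib (m + 6) - T := by
    simp only [upPot]
    rw [if_neg (by push_neg; exact ⟨by omega, by rw [hsm9]; exact hane⟩)]
    show Nat.fib (m + 6) - ∑ j ∈ Finset.Icc 1 (m + 8), s' j = _
    rw [hP8']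
  have hne9' : nePot s' (m + 9) = 1 := by simp [nePot, hsm9, hane]
  have hsz9' : sizePot (m + 9) (s' (m + 9)) = sizePot (m + 9) a := by rw [hsm9]
  have hup10' : upPot s' (m + 10) = 0 := by
    simp only [upPot]
    rw [if_neg (by push_neg; exact ⟨by omega, by rw [hsm10]; exact hbne⟩)]
    show Nat.fib (m + 7) - ∑ j ∈ Finset.Icc 1 (m + 9), s' j = 0
    rw [hP9']
    have h1 : Nat.fib (m + 7) ≤ Nat.fib (m + 9) := Nat.fib_mono (by omega)
    omega
  have hne10' : nePot s' (m + 10) = 1 := by simp [nePot, hsm10, hbne]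
  have hsz10' : sizePot (m + 10) (s' (m + 10)) = sizePot (m + 10) b := by rw [hsm10]
  -- splitting the sums
  have hIoc : ∀ x : ℕ, Finset.Icc 1 x = Finset.Ioc 0 x := fun x => Finset.Icc_add_one_left_eq_Ioc 0 x
  have hIoc2 : Finset.Icc (m + 12) k = Finset.Ioc (m + 11) k := Finset.Icc_add_one_left_eq_Ioc (m + 11) k
  have hsplit : ∀ F : ℕ → ℕ, ∑ j ∈ Finset.Icc 1 k, F j =
      (∑ j ∈ Finset.Icc 1 (m + 8), F j + F (m + 9) + F (m + 10) + F (m + 11)) +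
        ∑ j ∈ Finset.Icc (m + 12) k, F j := by
    intro F
    have h1 : ∑ j ∈ Finset.Icc 1 (m + 11), F j + ∑ j ∈ Finset.Icc (m + 12) k, F j =
        ∑ j ∈ Finset.Icc 1 k, F j := by
      rw [hIoc, hIoc, hIoc2]
      exact Finset.sum_Ioc_consecutive F (by omega) (by omega)
    have h2 : ∑ j ∈ Finset.Icc 1 (m + 11), F j =
        ∑ j ∈ Finset.Icc 1 (m + 8), F j + F (m + 9) + F (m + 10) + F (m + 11) := by
      rw [Finset.sum_Icc_succ_top (by omega), Finset.sum_Icc_succ_top (by omega),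
        Finset.sum_Icc_succ_top (by omega)]
    omega
  have e1 := hsplit fun j => upPot s j + sizePot j (s j) + nePot s j
  have e2 := hsplit fun j => upPot s' j + sizePot j (s' j) + nePot s' j
  beta_reduce at e1 e2
  have hhead : ∑ j ∈ Finset.Icc 1 (m + 8), (upPot s' j + sizePot j (s' j) + nePot s' j) =
      ∑ j ∈ Finset.Icc 1 (m + 8), (upPot s j + sizePot j (s j) + nePot s j) :=
    Finset.sum_congr rfl hterm_low
  have htail : ∑ j ∈ Finset.Icc (m + 12) k, (upPot s' j + sizePot j (s' j) + nePot s' j) =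
      ∑ j ∈ Finset.Icc (m + 12) k, (upPot s j + sizePot j (s j) + nePot s j) :=
    Finset.sum_congr rfl hterm_high
  have r1 : Nat.fib (m + 8) = Nat.fib (m + 6) + Nat.fib (m + 7) := by
    rw [show m + 8 = m + 6 + 2 from rfl, Nat.fib_add_two, show m + 6 + 1 = m + 7 from rfl]
  have r2 : Nat.fib (m + 7) = Nat.fib (m + 5) + Nat.fib (m + 6) := by
    rw [show m + 7 = m + 5 + 2 from rfl, Nat.fib_add_two, show m + 5 + 1 = m + 6 from rfl]
  clear hψ ha hb hempty hsize hs' hi hterm_low hterm_high hsplit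
  rw [show m + 11 - 6 = m + 5 from rfl]
  simp only [fhtngPot]
  omega
end

section
/- Let i ≥ 3 and k ≥ i+1. Let s(1), …, s(k) be natural numbers with s(i−2) ≥ F(i−2), F(i−1) ≤ s(i−1) ≤ F(i+2), F(i) ≤ s(i) ≤ F(i+3), and s(i+1) = 0. Let s̄ agree with s everywhere except s̄(i−1) = 0, s̄(i) = 0, and s̄(i+1) = s(i−1) + s(i). Then 1 + Φ(s̄) ≤ Φ(s). -/
/-- The merge-down lemma (Lemma 4.2): when `S_{i-2}`, `S_{i-1}`, `S_i` are all
nonempty (obeying their size invariants) and `S_{i+1}` is empty, concatenating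
`S_{i-1}` and `S_i` into `S_{i+1}` has amortized cost at most 0 at nominal cost 1. -/
theorem fhtng_merge_down (i k : ℕ) (hi : 3 ≤ i) (hik : i + 1 ≤ k) (s : ℕ → ℕ)
    (h2 : Nat.fib (i - 2) ≤ s (i - 2))
    (h1a : Nat.fib (i - 1) ≤ s (i - 1)) (h1b : s (i - 1) ≤ Nat.fib (i + 2))
    (h0a : Nat.fib i ≤ s i) (h0b : s i ≤ Nat.fib (i + 3))
    (hempty : s (i + 1) = 0)
    (s' : ℕ → ℕ)
    (hs' : ∀ j, s' j =
      if j = i - 1 then 0 else if j = i then 0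
      else if j = i + 1 then s (i - 1) + s i else s j) :
    1 + fhtngPot s' k ≤ fhtngPot s k := by
  have key : ∀ j, j ≠ i - 1 → j ≠ i → j ≠ i + 1 → s' j = s j := by
    intro j h1 h2 h3
    rw [hs', if_neg h1, if_neg h2, if_neg h3]
  have e1 : s' (i - 1) = 0 := by rw [hs', if_pos rfl]
  have e2 : s' i = 0 := by rw [hs', if_neg (by omega), if_pos rfl]
  have e3 : s' (i + 1) = s (i - 1) + s i := by
    rw [hs', if_neg (by omega), if_neg (by omega), if_pos rfl]
  have ha : 0 < s (i - 1) := lt_of_lt_of_le (Nat.fib_pos.mpr (by omega)) h1a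
  have hb : 0 < s i := lt_of_lt_of_le (Nat.fib_pos.mpr (by omega)) h0a
  have sum3 : ∀ f : ℕ → ℕ,
      ∑ j ∈ ({i - 1, i, i + 1} : Finset ℕ), f j = f (i - 1) + (f i + f (i + 1)) := by
    intro f
    rw [Finset.sum_insert (by simp only [Finset.mem_insert, Finset.mem_singleton]; omega),
      Finset.sum_insert (by simp only [Finset.mem_singleton]; omega), Finset.sum_singleton]
  have hsub : ∀ n, i + 1 ≤ n → ({i - 1, i, i + 1} : Finset ℕ) ⊆ Finset.Icc 1 n := by
    intro n hn x hx
    simp only [Finset.mem_insert, Finset.mem_singleton] at hx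
    simp only [Finset.mem_Icc]
    omega
  have sumEq : ∀ n, i + 1 ≤ n →
      ∑ j ∈ Finset.Icc 1 n, s' j = ∑ j ∈ Finset.Icc 1 n, s j := by
    intro n hn
    rw [← Finset.sum_sdiff (hsub n hn) (f := s'), ← Finset.sum_sdiff (hsub n hn) (f := s)]
    have hd : ∑ j ∈ Finset.Icc 1 n \ {i - 1, i, i + 1}, s' j
        = ∑ j ∈ Finset.Icc 1 n \ {i - 1, i, i + 1}, s j := by
      refine Finset.sum_congr rfl ?_
      intro x hx
      simp only [Finset.mem_sdiff, Finset.mem_insert, Finset.mem_singleton] at hx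
      exact key x (by omega) (by omega) (by omega)
    rw [hd, sum3, sum3, e1, e2, e3, hempty]
    ring
  have hdiff : ∑ m ∈ Finset.Icc 1 k \ {i - 1, i, i + 1},
        (upPot s' m + sizePot m (s' m) + nePot s' m)
      = ∑ m ∈ Finset.Icc 1 k \ {i - 1, i, i + 1},
        (upPot s m + sizePot m (s m) + nePot s m) := by
    refine Finset.sum_congr rfl ?_
    intro x hx
    simp only [Finset.mem_sdiff, Finset.mem_Icc, Finset.mem_insert,
      Finset.mem_singleton] at hx
    have hxe : s' x = s x := key x (by omega) (by omega) (by omega)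
    have hup : upPot s' x = upPot s x := by
      unfold upPot
      rw [hxe]
      split_ifs with h
      · rfl
      · have hsum : ∑ j ∈ Finset.Icc 1 (x - 1), s' j
            = ∑ j ∈ Finset.Icc 1 (x - 1), s j := by
          rcases le_or_gt x (i + 1) with hx1 | hx1
          · refine Finset.sum_congr rfl ?_
            intro y hy
            simp only [Finset.mem_Icc] at hy
            exact key y (by omega) (by omega) (by omega)
          · exact sumEq (x - 1) (by omega)
        rw [hsum]
    unfold nePot
    rw [hup, hxe]
  unfold fhtngPot
  rw [← Finset.sum_sdiff (hsub k hik), ← Finset.sum_sdiff (hsub k hik), hdiff, sum3, sum3]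
  have t1 : upPot s' (i - 1) + sizePot (i - 1) (s' (i - 1)) + nePot s' (i - 1) = 0 := by
    simp [upPot, sizePot, nePot, e1]
  have t2 : upPot s' i + sizePot i (s' i) + nePot s' i = 0 := by
    simp [upPot, sizePot, nePot, e2]
  have hup3 : upPot s' (i + 1) = 0 := by
    unfold upPot
    rw [if_neg (by push_neg; exact ⟨by omega, by rw [e3]; omega⟩)]
    apply Nat.sub_eq_zero_of_le
    have hmem : i - 2 ∈ Finset.Icc 1 (i + 1 - 1) := by
      simp only [Finset.mem_Icc]; omega
    have hle : s' (i - 2) ≤ ∑ j ∈ Finset.Icc 1 (i + 1 - 1), s' j :=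
      Finset.single_le_sum (fun _ _ => Nat.zero_le _) hmem
    have h22 : s' (i - 2) = s (i - 2) := key _ (by omega) (by omega) (by omega)
    have hf : Nat.fib (i + 1 - 3) = Nat.fib (i - 2) := by congr 1 <;> omega
    omega
  have t3 : upPot s' (i + 1) + sizePot (i + 1) (s' (i + 1)) + nePot s' (i + 1)
      = (Nat.fib (i + 2) - (s (i - 1) + s i)) + ((s (i - 1) + s i) - Nat.fib (i + 3)) + 1 := by
    rw [hup3]
    unfold sizePot nePot
    simp only [e3, if_neg (show ¬(s (i - 1) + s i = 0) by omega)]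
    simp only [show i + 1 + 1 = i + 2 from rfl, show i + 1 + 2 = i + 3 from rfl]
    omega
  have t4 : upPot s (i + 1) + sizePot (i + 1) (s (i + 1)) + nePot s (i + 1) = 0 := by
    simp [upPot, sizePot, nePot, hempty]
  have t5 : sizePot (i - 1) (s (i - 1))
      = (Nat.fib (i - 1 + 1) - s (i - 1)) + (s (i - 1) - Nat.fib (i - 1 + 2)) := by
    unfold sizePot; rw [if_neg (by omega)]
  have t6 : sizePot i (s i) = (Nat.fib (i + 1) - s i) + (s i - Nat.fib (i + 2)) := by
    unfold sizePot; rw [if_neg (by omega)]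
  have t7 : nePot s (i - 1) = 1 := by unfold nePot; rw [if_neg (by omega)]
  have t8 : nePot s i = 1 := by unfold nePot; rw [if_neg (by omega)]
  have f1 : Nat.fib (i - 1 + 1) = Nat.fib i := by congr 1 <;> omega
  have f2 : Nat.fib (i - 1 + 2) = Nat.fib (i + 1) := by congr 1 <;> omega
  have g1 : Nat.fib (i + 2) = Nat.fib i + Nat.fib (i + 1) := Nat.fib_add_two
  have g2 : Nat.fib (i + 3) = Nat.fib (i + 1) + Nat.fib (i + 2) := by
    rw [show i + 3 = i + 1 + 2 by ring]; exact Nat.fib_add_two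
  rw [t1, t2, t3, t4, t5, t6, t7, t8, f1, f2]
  omega
end

section
/- Let i ≥ 3 and k ≥ i+1. Let s(1), …, s(k) be natural numbers with s(i) = F(i+3) and s(i+1) = 0. Let s̄ agree with s everywhere except s̄(i) = 0 and s̄(i+1) = F(i+3). Then 1 + Φ(s̄) ≤ Φ(s). -/
/-- The overflow-down lemma (Lemma 4.3): when `S_i` is full (has `F(i+3)` elements)
and `S_{i+1}` is empty, moving the whole set from slot `i` to slot `i+1` has
amortized cost at most 0 at nominal cost 1. -/
theorem fhtng_overflow_down (i k : ℕ) (hi : 3 ≤ i) (hik : i + 1 ≤ k) (s : ℕ → ℕ)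
    (hfull : s i = Nat.fib (i + 3)) (hempty : s (i + 1) = 0)
    (s' : ℕ → ℕ)
    (hs' : ∀ j, s' j =
      if j = i then 0 else if j = i + 1 then Nat.fib (i + 3) else s j) :
    1 + fhtngPot s' k ≤ fhtngPot s k := by
  have hF3 : 0 < Nat.fib (i + 3) := Nat.fib_pos.2 (by omega)
  have hs'i : s' i = 0 := by rw [hs']; simp
  have hs'i1 : s' (i + 1) = Nat.fib (i + 3) := by
    rw [hs', if_neg (by omega), if_pos rfl]
  -- prefix sums agree for m ≥ i+1
  have hsum : ∀ m, i + 1 ≤ m →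
      ∑ t ∈ Finset.Icc 1 m, s' t = ∑ t ∈ Finset.Icc 1 m, s t := by
    intro m hm
    have h1 : i + 1 ∈ Finset.Icc 1 m := by simp [Finset.mem_Icc]; omega
    have h2 : i ∈ (Finset.Icc 1 m).erase (i + 1) := by
      simp [Finset.mem_erase, Finset.mem_Icc]; omega
    rw [← Finset.add_sum_erase _ s' h1, ← Finset.add_sum_erase _ s h1,
        ← Finset.add_sum_erase _ s' h2, ← Finset.add_sum_erase _ s h2]
    have hrest : ∑ t ∈ ((Finset.Icc 1 m).erase (i + 1)).erase i, s' t =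
        ∑ t ∈ ((Finset.Icc 1 m).erase (i + 1)).erase i, s t := by
      refine Finset.sum_congr rfl fun t ht => ?_
      simp only [Finset.mem_erase] at ht
      rw [hs', if_neg ht.1, if_neg ht.2.1]
    rw [hrest, hs'i, hs'i1, hfull, hempty]
    omega
  -- prefix sums agree termwise for m < i
  have hsum' : ∀ m, m < i →
      ∑ t ∈ Finset.Icc 1 m, s' t = ∑ t ∈ Finset.Icc 1 m, s t := by
    intro m hm
    refine Finset.sum_congr rfl fun t ht => ?_
    simp only [Finset.mem_Icc] at ht
    rw [hs', if_neg (by omega), if_neg (by omega)]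
  -- upPot agrees away from i, i+1
  have hup : ∀ j, j ≠ i → j ≠ i + 1 → upPot s' j = upPot s j := by
    intro j h1 h2
    have hsj : s' j = s j := by rw [hs', if_neg h1, if_neg h2]
    unfold upPot
    rw [hsj]
    by_cases hc : j ≤ 2 ∨ s j = 0
    · rw [if_pos hc, if_pos hc]
    · rw [if_neg hc, if_neg hc]
      congr 1
      rcases lt_or_gt_of_ne h1 with hji | hji
      · exact hsum' (j - 1) (by omega)
      · exact hsum (j - 1) (by omega)
  -- decompose the total potential
  have hmem1 : i + 1 ∈ Finset.Icc 1 k := by simp [Finset.mem_Icc]; omega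
  have hmem2 : i ∈ (Finset.Icc 1 k).erase (i + 1) := by
    simp [Finset.mem_erase, Finset.mem_Icc]; omega
  have expand : ∀ t : ℕ → ℕ, fhtngPot t k =
      (upPot t (i + 1) + sizePot (i + 1) (t (i + 1)) + nePot t (i + 1)) +
      ((upPot t i + sizePot i (t i) + nePot t i) +
        ∑ j ∈ ((Finset.Icc 1 k).erase (i + 1)).erase i,
          (upPot t j + sizePot j (t j) + nePot t j)) := by
    intro t
    rw [fhtngPot, ← Finset.add_sum_erase _ _ hmem1, ← Finset.add_sum_erase _ _ hmem2]
  rw [expand s, expand s']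
  have hrest : ∑ j ∈ ((Finset.Icc 1 k).erase (i + 1)).erase i,
      (upPot s' j + sizePot j (s' j) + nePot s' j) =
      ∑ j ∈ ((Finset.Icc 1 k).erase (i + 1)).erase i,
      (upPot s j + sizePot j (s j) + nePot s j) := by
    refine Finset.sum_congr rfl fun j hj => ?_
    simp only [Finset.mem_erase] at hj
    have hsj : s' j = s j := by rw [hs', if_neg hj.1, if_neg hj.2.1]
    rw [hup j hj.1 hj.2.1, hsj]
    simp only [nePot, hsj]
  rw [hrest]
  -- compute the individual terms
  have t1 : upPot s' i = 0 := by simp [upPot, hs'i]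
  have t2 : sizePot i (s' i) = 0 := by simp [sizePot, hs'i]
  have t3 : nePot s' i = 0 := by simp [nePot, hs'i]
  have t4 : sizePot (i + 1) (s' (i + 1)) = 0 := by
    rw [sizePot, hs'i1, if_neg (by omega)]
    have h1 : Nat.fib (i + 1 + 1) ≤ Nat.fib (i + 3) := Nat.fib_mono (by omega)
    have h2 : Nat.fib (i + 1 + 2) = Nat.fib (i + 3) := by
      rw [show i + 1 + 2 = i + 3 from by omega]
    omega
  have t5 : nePot s' (i + 1) = 1 := by
    rw [nePot, hs'i1, if_neg (by omega)]
  have t6 : upPot s' (i + 1) ≤ Nat.fib (i + 1 - 3) := by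
    rw [upPot]; split
    · omega
    · exact Nat.sub_le _ _
  have t7 : sizePot i (s i) = Nat.fib (i + 1) := by
    rw [sizePot, hfull, if_neg (by omega)]
    have h1 : Nat.fib (i + 1 + 2) = Nat.fib (i + 1) + Nat.fib (i + 1 + 1) :=
      Nat.fib_add_two
    rw [show i + 1 + 2 = i + 3 from by omega, show i + 1 + 1 = i + 2 from by omega] at h1
    omega
  have t8 : nePot s i = 1 := by rw [nePot, hfull, if_neg (by omega)]
  have t9 : upPot s (i + 1) = 0 := by simp [upPot, hempty]
  have t10 : sizePot (i + 1) (s (i + 1)) = 0 := by simp [sizePot, hempty]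
  have t11 : nePot s (i + 1) = 0 := by simp [nePot, hempty]
  have key : Nat.fib (i + 1 - 3) + 1 ≤ Nat.fib (i + 1) := by
    have h1 : Nat.fib (i - 2) ≤ Nat.fib i := Nat.fib_mono (by omega)
    have h2 : 1 ≤ Nat.fib (i - 1) := Nat.fib_pos.2 (by omega)
    have h3 : Nat.fib (i - 1 + 2) = Nat.fib (i - 1) + Nat.fib (i - 1 + 1) :=
      Nat.fib_add_two
    have h4 : i - 1 + 2 = i + 1 := by omega
    have h5 : i - 1 + 1 = i := by omega
    have h6 : i + 1 - 3 = i - 2 := by omega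
    rw [h4, h5] at h3
    rw [h6]
    omega
  rw [t1, t2, t3, t4, t5, t7, t8, t9, t10, t11]
  omega
end

section
/- Let i ≥ 5 and k ≥ i+2. Let s(1), …, s(k) be natural numbers with s(i) = F(i+3), s(i+1) ≥ F(i+1), and s(i+2) = 0. Let s̄ agree with s everywhere except s̄(i) = 0 and s̄(i+2) = F(i+3) (in particular s̄(i+1) = s(i+1)). Then F(i−4) + Φ(s̄) ≤ Φ(s). -/
/-- The overflow-thru lemma (Lemma 4.4): when `S_i` is full (has `F(i+3)` elements),
`S_{i+1}` is nonempty (so `s(i+1) ≥ F(i+1)`), and `S_{i+2}` is empty, merging `S_i`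
through `S_{i+1}` (leaving `|S_{i+1}|` unchanged and moving the `F(i+3)` largest
elements to `S_{i+2}`) has amortized cost at most 0 at nominal cost `F(i-4)`. -/
theorem fhtng_overflow_thru (i k : ℕ) (hi : 5 ≤ i) (hik : i + 2 ≤ k) (s : ℕ → ℕ)
    (hfull : s i = Nat.fib (i + 3)) (hnext : Nat.fib (i + 1) ≤ s (i + 1))
    (hempty : s (i + 2) = 0)
    (s' : ℕ → ℕ)
    (hs' : ∀ j, s' j =
      if j = i then 0 else if j = i + 2 then Nat.fib (i + 3) else s j) :
    Nat.fib (i - 4) + fhtngPot s' k ≤ fhtngPot s k := by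
  have hsi : s' i = 0 := by simp [hs']
  have hsi1 : s' (i + 1) = s (i + 1) := by
    rw [hs', if_neg (by omega), if_neg (by omega)]
  have hsi2 : s' (i + 2) = Nat.fib (i + 3) := by
    rw [hs']; simp
  have hsne : ∀ j, j ≠ i → j ≠ i + 2 → s' j = s j := by
    intro j h1 h2; rw [hs']; simp [h1, h2]
  -- prefix sums agree for m < i or m ≥ i + 2
  have hsum : ∀ m, (m < i ∨ i + 2 ≤ m) →
      ∑ j ∈ Finset.Icc 1 m, s' j = ∑ j ∈ Finset.Icc 1 m, s j := by
    intro m hm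
    rcases hm with hm | hm
    · exact Finset.sum_congr rfl fun x hx => by
        simp only [Finset.mem_Icc] at hx; exact hsne x (by omega) (by omega)
    · have hT2 : ({i, i + 2} : Finset ℕ) ⊆ Finset.Icc 1 m := by
        intro x hx
        simp only [Finset.mem_insert, Finset.mem_singleton] at hx
        simp only [Finset.mem_Icc]; omega
      rw [← Finset.sum_sdiff hT2 (f := s'), ← Finset.sum_sdiff hT2 (f := s)]
      have h1 : ∑ j ∈ Finset.Icc 1 m \ {i, i + 2}, s' j
          = ∑ j ∈ Finset.Icc 1 m \ {i, i + 2}, s j := by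
        refine Finset.sum_congr rfl fun x hx => ?_
        simp only [Finset.mem_sdiff, Finset.mem_insert, Finset.mem_singleton] at hx
        exact hsne x (by omega) (by omega)
      have h2 : ∑ j ∈ ({i, i + 2} : Finset ℕ), s' j
          = ∑ j ∈ ({i, i + 2} : Finset ℕ), s j := by
        rw [Finset.sum_pair (by omega), Finset.sum_pair (by omega)]
        rw [hsi, hsi2, hfull, hempty]
        omega
      rw [h1, h2]
  set T : Finset ℕ := {i, i + 1, i + 2} with hTdef
  have hT : T ⊆ Finset.Icc 1 k := by
    intro x hx
    simp only [hTdef, Finset.mem_insert, Finset.mem_singleton] at hx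
    simp only [Finset.mem_Icc]; omega
  set f : ℕ → ℕ := fun j => upPot s j + sizePot j (s j) + nePot s j with hfdef
  set f' : ℕ → ℕ := fun j => upPot s' j + sizePot j (s' j) + nePot s' j with hf'def
  have hsplit : fhtngPot s k = ∑ j ∈ Finset.Icc 1 k \ T, f j + ∑ j ∈ T, f j :=
    (Finset.sum_sdiff hT).symm
  have hsplit' : fhtngPot s' k = ∑ j ∈ Finset.Icc 1 k \ T, f' j + ∑ j ∈ T, f' j :=
    (Finset.sum_sdiff hT).symm
  -- off-T terms agree
  have hoff : ∑ j ∈ Finset.Icc 1 k \ T, f' j = ∑ j ∈ Finset.Icc 1 k \ T, f j := by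
    refine Finset.sum_congr rfl fun x hx => ?_
    simp only [Finset.mem_sdiff, Finset.mem_Icc, hTdef, Finset.mem_insert,
      Finset.mem_singleton] at hx
    have hx1 : x ≠ i := by omega
    have hx2 : x ≠ i + 2 := by omega
    have hx3 : s' x = s x := hsne x hx1 hx2
    have hup : upPot s' x = upPot s x := by
      unfold upPot
      rw [hx3, hsum (x - 1) (by omega)]
    simp [hfdef, hf'def, hup, hx3, nePot]
  -- sum over T
  have hTsum : ∀ g : ℕ → ℕ, ∑ j ∈ T, g j = g i + g (i + 1) + g (i + 2) := by
    intro g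
    rw [hTdef, Finset.sum_insert (by simp), Finset.sum_insert (by simp),
      Finset.sum_singleton]
    ring
  rw [hsplit, hsplit', hoff, hTsum f, hTsum f']
  have hfibpos : 0 < Nat.fib (i + 1) := Nat.fib_pos.2 (by omega)
  have hfib3pos : 0 < Nat.fib (i + 3) := Nat.fib_pos.2 (by omega)
  have hsi1pos : s (i + 1) ≠ 0 := by omega
  -- f' i = 0
  have hf'i : f' i = 0 := by
    simp [hf'def, upPot, sizePot, nePot, hsi]
  -- f (i+2) = 0
  have hfi2 : f (i + 2) = 0 := by
    simp [hfdef, upPot, sizePot, nePot, hempty]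
  -- f i
  have hfi : f i = upPot s i + Nat.fib (i + 1) + 1 := by
    have h1 : Nat.fib (i + 1) - Nat.fib (i + 3) = 0 :=
      Nat.sub_eq_zero_of_le (Nat.fib_mono (by omega))
    have h2 : Nat.fib (i + 3) = Nat.fib (i + 1) + Nat.fib (i + 2) := Nat.fib_add_two
    simp only [hfdef, sizePot, nePot, hfull]
    rw [if_neg (by omega), if_neg (by omega), h1]
    omega
  -- f (i+1)
  have hupi1 : upPot s (i + 1) = 0 := by
    unfold upPot
    rw [if_neg (by push_neg; exact ⟨by omega, hsi1pos⟩)]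
    have : Nat.fib (i + 1 - 3) ≤ ∑ j ∈ Finset.Icc 1 (i + 1 - 1), s j := by
      calc Nat.fib (i + 1 - 3) ≤ Nat.fib (i + 3) := Nat.fib_mono (by omega)
        _ = s i := hfull.symm
        _ ≤ ∑ j ∈ Finset.Icc 1 (i + 1 - 1), s j :=
          Finset.single_le_sum (fun _ _ => Nat.zero_le _)
            (by simp only [Finset.mem_Icc]; omega)
    omega
  have hfi1 : f (i + 1) = sizePot (i + 1) (s (i + 1)) + 1 := by
    simp [hfdef, hupi1, nePot, hsi1pos]
  -- f' (i+1)
  have hf'i1 : f' (i + 1) ≤ Nat.fib (i - 2) + sizePot (i + 1) (s (i + 1)) + 1 := by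
    have hup : upPot s' (i + 1) ≤ Nat.fib (i - 2) := by
      unfold upPot
      split
      · omega
      · have : i + 1 - 3 = i - 2 := by omega
        rw [this]; exact Nat.sub_le _ _
    have : sizePot (i + 1) (s' (i + 1)) = sizePot (i + 1) (s (i + 1)) := by rw [hsi1]
    simp only [hf'def, this, nePot, hsi1, if_neg hsi1pos]
    omega
  -- f' (i+2) = 1
  have hf'i2 : f' (i + 2) = 1 := by
    have hup : upPot s' (i + 2) = 0 := by
      unfold upPot
      rw [if_neg (by push_neg; constructor <;> omega)]
      have : Nat.fib (i + 2 - 3) ≤ ∑ j ∈ Finset.Icc 1 (i + 2 - 1), s' j := by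
        calc Nat.fib (i + 2 - 3) ≤ Nat.fib (i + 1) := Nat.fib_mono (by omega)
          _ ≤ s' (i + 1) := by rw [hsi1]; exact hnext
          _ ≤ ∑ j ∈ Finset.Icc 1 (i + 2 - 1), s' j :=
            Finset.single_le_sum (fun _ _ => Nat.zero_le _)
              (by simp only [Finset.mem_Icc]; omega)
      omega
    have hsz : sizePot (i + 2) (s' (i + 2)) = 0 := by
      rw [hsi2]
      unfold sizePot
      rw [if_neg (by omega), show i + 2 + 1 = i + 3 by omega]
      have h2 : Nat.fib (i + 3) - Nat.fib (i + 2 + 2) = 0 :=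
        Nat.sub_eq_zero_of_le (Nat.fib_mono (by omega))
      omega
    have hne : nePot s' (i + 2) = 1 := by
      unfold nePot
      rw [if_neg (by rw [hsi2]; omega)]
    simp only [hf'def]
    rw [hup, hsz, hne]
  -- final arithmetic
  have hkey : Nat.fib (i - 4) + Nat.fib (i - 2) ≤ Nat.fib (i + 1) := by
    have h1 : Nat.fib (i + 1) = Nat.fib (i - 1) + Nat.fib i := by
      have := Nat.fib_add_two (n := i - 1)
      have h : i - 1 + 2 = i + 1 := by omega
      have h' : i - 1 + 1 = i := by omega
      rw [h, h'] at this; exact this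
    have h2 : Nat.fib (i - 4) ≤ Nat.fib (i - 1) := Nat.fib_mono (by omega)
    have h3 : Nat.fib (i - 2) ≤ Nat.fib i := Nat.fib_mono (by omega)
    omega
  omega
end

section
/- Let i ≥ 6 and k ≥ i. Let s(1), …, s(k) be natural numbers with s(i) = F(i) and s(i−1) = 0. Let s̄ agree with s everywhere except s̄(i−1) = F(i) and s̄(i) = 0. Then 1 + Φ(s̄) ≤ Φ(s). -/
/-- The underflow-up lemma (Lemma 4.5): when `S_i` is underfull (has exactly `F(i)`
elements) and `S_{i-1}` is empty, moving the whole set from slot `i` to slot `i-1`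
has amortized cost at most 0 at nominal cost 1. -/
theorem fhtng_underflow_up (i k : ℕ) (hi : 6 ≤ i) (hik : i ≤ k) (s : ℕ → ℕ)
    (hunder : s i = Nat.fib i) (hempty : s (i - 1) = 0)
    (s' : ℕ → ℕ)
    (hs' : ∀ j, s' j =
      if j = i - 1 then Nat.fib i else if j = i then 0 else s j) :
    1 + fhtngPot s' k ≤ fhtngPot s k := by
  have hfi : 0 < Nat.fib i := Nat.fib_pos.mpr (by omega)
  have hs'i1 : s' (i - 1) = Nat.fib i := by rw [hs']; simp
  have hs'i : s' i = 0 := by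
    rw [hs' i, if_neg (by omega : ¬ i = i - 1), if_pos rfl]
  have hs'j : ∀ j, j ≠ i - 1 → j ≠ i → s' j = s j := by
    intro j h1 h2; rw [hs', if_neg h1, if_neg h2]
  have hpre_small : ∀ m, m + 2 ≤ i →
      ∑ j ∈ Finset.Icc 1 m, s' j = ∑ j ∈ Finset.Icc 1 m, s j := by
    intro m hm
    refine Finset.sum_congr rfl fun j hj => ?_
    simp only [Finset.mem_Icc] at hj
    exact hs'j j (by omega) (by omega)
  have hpre_big : ∀ m, i ≤ m →
      ∑ j ∈ Finset.Icc 1 m, s' j = ∑ j ∈ Finset.Icc 1 m, s j := by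
    intro m hm
    have h1 : i ∈ Finset.Icc 1 m := by simp; omega
    have h2 : i - 1 ∈ (Finset.Icc 1 m).erase i := by
      rw [Finset.mem_erase]; simp; omega
    rw [← Finset.add_sum_erase _ s' h1, ← Finset.add_sum_erase _ s' h2,
        ← Finset.add_sum_erase _ s h1, ← Finset.add_sum_erase _ s h2]
    have hrest : ∑ j ∈ ((Finset.Icc 1 m).erase i).erase (i - 1), s' j
        = ∑ j ∈ ((Finset.Icc 1 m).erase i).erase (i - 1), s j := by
      refine Finset.sum_congr rfl fun j hj => ?_
      rw [Finset.mem_erase, Finset.mem_erase] at hj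
      exact hs'j j hj.1 hj.2.1
    rw [hrest, hs'i, hs'i1, hempty, hunder]; ring
  have hup : ∀ j, j ≠ i - 1 → j ≠ i → upPot s' j = upPot s j := by
    intro j h1 h2
    unfold upPot
    rw [hs'j j h1 h2]
    by_cases hc : j ≤ 2 ∨ s j = 0
    · simp [hc]
    · rw [if_neg hc, if_neg hc]
      congr 1
      rcases lt_or_ge j i with h | h
      · exact hpre_small (j - 1) (by omega)
      · exact hpre_big (j - 1) (by omega)
  -- split the sums
  unfold fhtngPot
  have hmi : i ∈ Finset.Icc 1 k := by simp; omega
  have hmi1 : i - 1 ∈ (Finset.Icc 1 k).erase i := by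
    rw [Finset.mem_erase]; simp; omega
  rw [← Finset.add_sum_erase _ (fun j => upPot s' j + sizePot j (s' j) + nePot s' j) hmi,
      ← Finset.add_sum_erase _ (fun j => upPot s' j + sizePot j (s' j) + nePot s' j) hmi1,
      ← Finset.add_sum_erase _ (fun j => upPot s j + sizePot j (s j) + nePot s j) hmi,
      ← Finset.add_sum_erase _ (fun j => upPot s j + sizePot j (s j) + nePot s j) hmi1]
  have hrest : ∑ j ∈ ((Finset.Icc 1 k).erase i).erase (i - 1),
        (upPot s' j + sizePot j (s' j) + nePot s' j)
      = ∑ j ∈ ((Finset.Icc 1 k).erase i).erase (i - 1),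
        (upPot s j + sizePot j (s j) + nePot s j) := by
    refine Finset.sum_congr rfl fun j hj => ?_
    rw [Finset.mem_erase, Finset.mem_erase] at hj
    rw [hup j hj.1 hj.2.1, hs'j j hj.1 hj.2.1]
    simp only [nePot, hs'j j hj.1 hj.2.1]
  rw [hrest]
  -- evaluate the special terms
  have hterm_s'_i : upPot s' i + sizePot i (s' i) + nePot s' i = 0 := by
    simp [upPot, sizePot, nePot, hs'i]
  have hterm_s_i1 : upPot s (i - 1) + sizePot (i - 1) (s (i - 1)) + nePot s (i - 1) = 0 := by
    simp [upPot, sizePot, nePot, hempty]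
  set P := ∑ j ∈ Finset.Icc 1 (i - 2), s j with hP
  have hsum_i1 : ∑ j ∈ Finset.Icc 1 (i - 1), s j = P := by
    have h1 : i - 1 = (i - 2) + 1 := by omega
    rw [h1, Finset.sum_Icc_succ_top (by omega), ← h1, hempty, add_zero]
  have hup_s_i : upPot s i = Nat.fib (i - 3) - P := by
    rw [upPot, if_neg (by push_neg; constructor <;> omega), hsum_i1]
  have hup_s'_i1 : upPot s' (i - 1) = Nat.fib (i - 4) - P := by
    rw [upPot, if_neg (by push_neg; refine ⟨by omega, by rw [hs'i1]; omega⟩)]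
    have h1 : i - 1 - 3 = i - 4 := by omega
    have h2 : i - 1 - 1 = i - 2 := by omega
    rw [h1, h2, hpre_small (i - 2) (by omega)]
  have hfib1 : Nat.fib (i + 1) = Nat.fib (i - 1) + Nat.fib i := by
    have h1 : i + 1 = (i - 1) + 2 := by omega
    have h2 : i = (i - 1) + 1 := by omega
    rw [h1, Nat.fib_add_two, ← h2]
  have hsize_s_i : sizePot i (s i) = Nat.fib (i - 1) := by
    rw [hunder, sizePot, if_neg (by omega)]
    have h1 : Nat.fib i ≤ Nat.fib (i + 2) := Nat.fib_mono (by omega)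
    omega
  have hsize_s'_i1 : sizePot (i - 1) (s' (i - 1)) = 0 := by
    rw [hs'i1, sizePot, if_neg (by omega)]
    have h1 : i - 1 + 1 = i := by omega
    have h2 : i - 1 + 2 = i + 1 := by omega
    have h3 : Nat.fib i ≤ Nat.fib (i + 1) := Nat.fib_mono (by omega)
    rw [h1, h2]; omega
  have hne_s_i : nePot s i = 1 := by rw [nePot, if_neg (by omega)]
  have hne_s'_i1 : nePot s' (i - 1) = 1 := by rw [nePot, if_neg (by rw [hs'i1]; omega)]
  have hmono : Nat.fib (i - 4) ≤ Nat.fib (i - 3) := Nat.fib_mono (by omega)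
  have hpos : 1 ≤ Nat.fib (i - 1) := Nat.fib_pos.mpr (by omega)
  simp only [hterm_s'_i, hterm_s_i1, hup_s_i, hup_s'_i1, hsize_s_i, hsize_s'_i1,
    hne_s_i, hne_s'_i1]
  omega
end

section
/- Let i ≥ 7 and k ≥ i. Let s(1), …, s(k) be natural numbers with s(i) = F(i), s(i−1) ≥ F(i−1), and s(i−2) = 0. Let s̄ agree with s everywhere except s̄(i−2) = F(i) and s̄(i) = 0 (in particular s̄(i−1) = s(i−1)). Then F(i−6) + Φ(s̄) ≤ Φ(s). -/
lemma sum_swap_aux (s s' : ℕ → ℕ) (a b : ℕ) (hab : a ≠ b)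
    (h : ∀ j, j ≠ a → j ≠ b → s' j = s j)
    (hsum : s' a + s' b = s a + s b)
    (B : Finset ℕ) (ha : a ∈ B) (hb : b ∈ B) :
    ∑ j ∈ B, s' j = ∑ j ∈ B, s j := by
  have hsub : ({a, b} : Finset ℕ) ⊆ B := by
    intro x hx
    simp only [Finset.mem_insert, Finset.mem_singleton] at hx
    rcases hx with rfl | rfl <;> assumption
  rw [← Finset.sum_sdiff hsub, ← Finset.sum_sdiff hsub]
  congr 1
  · refine Finset.sum_congr rfl fun j hj => ?_
    simp only [Finset.mem_sdiff, Finset.mem_insert, Finset.mem_singleton] at hj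
    push_neg at hj
    exact h j hj.2.1 hj.2.2
  · rw [Finset.sum_pair hab, Finset.sum_pair hab, hsum]


set_option maxHeartbeats 2000000 in
lemma fhtng_arith (n C P s6 : ℕ) (hs6 : Nat.fib (n+6) ≤ s6) :
  Nat.fib (n+7-6) +
    (C + (Nat.fib (n+2) - P + (Nat.fib (n+5+1) - Nat.fib (n+7) + (Nat.fib (n+7) - Nat.fib (n+5+2))) + 1 +
      (Nat.fib (n+3) - (P + Nat.fib (n+7)) + (Nat.fib (n+6+1) - s6 + (s6 - Nat.fib (n+6+2))) + 1) +
      (0 + 0 + 0))) ≤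
  C + (0 + 0 + 0 +
    (Nat.fib (n+3) - P + (Nat.fib (n+6+1) - s6 + (s6 - Nat.fib (n+6+2))) + 1) +
    (Nat.fib (n+4) - (P + s6) + (Nat.fib (n+7+1) - Nat.fib (n+7) + (Nat.fib (n+7) - Nat.fib (n+7+2))) + 1)) := by
  have e0 : Nat.fib (n+7-6) = Nat.fib (n+1) := rfl
  have e1 : Nat.fib (n+5+1) = Nat.fib (n+6) := rfl
  have e2 : Nat.fib (n+5+2) = Nat.fib (n+7) := rfl
  have e3 : Nat.fib (n+6+1) = Nat.fib (n+7) := rfl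
  have e4 : Nat.fib (n+6+2) = Nat.fib (n+8) := rfl
  have e5 : Nat.fib (n+7+1) = Nat.fib (n+8) := rfl
  have e6 : Nat.fib (n+7+2) = Nat.fib (n+9) := rfl
  have f1 : Nat.fib (n+3) = Nat.fib (n+1) + Nat.fib (n+2) := by rw [Nat.fib_add_two]
  have f2 : Nat.fib (n+8) = Nat.fib (n+6) + Nat.fib (n+7) := by rw [Nat.fib_add_two]
  have f3 : Nat.fib (n+3) ≤ Nat.fib (n+6) := Nat.fib_mono (by omega)
  have f4 : Nat.fib (n+6) ≤ Nat.fib (n+7) := Nat.fib_mono (by omega)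
  have f5 : Nat.fib (n+7) ≤ Nat.fib (n+9) := Nat.fib_mono (by omega)
  have f6 : Nat.fib (n+4) ≤ Nat.fib (n+6) := Nat.fib_mono (by omega)
  have f7 : Nat.fib (n+1) ≤ Nat.fib (n+2) := Nat.fib_mono (by omega)
  omega

set_option maxHeartbeats 1000000 in
/-- The underflow-thru lemma (Lemma 4.6): when `S_i` is underfull (has exactly
`F(i)` elements), `S_{i-1}` is nonempty (so `s(i-1) ≥ F(i-1)`), and `S_{i-2}` is
empty, merging `S_i` through `S_{i-1}` (leaving `|S_{i-1}|` unchanged and moving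
the `F(i)` smallest elements to `S_{i-2}`) has amortized cost at most 0 at nominal
cost `F(i-6)`. -/
theorem fhtng_underflow_thru (i k : ℕ) (hi : 7 ≤ i) (hik : i ≤ k) (s : ℕ → ℕ)
    (hunder : s i = Nat.fib i) (hprev : Nat.fib (i - 1) ≤ s (i - 1))
    (hempty : s (i - 2) = 0)
    (s' : ℕ → ℕ)
    (hs' : ∀ j, s' j =
      if j = i - 2 then Nat.fib i else if j = i then 0 else s j) :
    Nat.fib (i - 6) + fhtngPot s' k ≤ fhtngPot s k := by
  obtain ⟨n, rfl⟩ : ∃ n, i = n + 7 := ⟨i - 7, by omega⟩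
  have hi2 : n + 7 - 2 = n + 5 := rfl
  have hs5 : s (n+5) = 0 := hempty
  have hs6 : Nat.fib (n+6) ≤ s (n+6) := hprev
  have hs7 : s (n+7) = Nat.fib (n+7) := hunder
  have hfib7pos : 0 < Nat.fib (n+7) := Nat.fib_pos.2 (by omega)
  have h0 : Nat.fib (n+7) ≠ 0 := hfib7pos.ne'
  have hfib6pos : 0 < Nat.fib (n+6) := Nat.fib_pos.2 (by omega)
  have h6 : s (n+6) ≠ 0 := by omega
  have h7 : s (n+7) ≠ 0 := by rw [hunder]; exact h0
  have hs'5 : s' (n+5) = Nat.fib (n+7) := by rw [hs' (n+5), hi2, if_pos rfl]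
  have hs'6 : s' (n+6) = s (n+6) := by
    rw [hs' (n+6), hi2, if_neg (by omega), if_neg (by omega)]
  have hs'7 : s' (n+7) = 0 := by
    rw [hs' (n+7), hi2, if_neg (by omega), if_pos rfl]
  have hs'o : ∀ j, j ≠ n+5 → j ≠ n+7 → s' j = s j := by
    intro j h1 h2
    rw [hs' j, hi2, if_neg h1, if_neg h2]
  set P := ∑ j ∈ Finset.Icc 1 (n+4), s j with hP
  have hP' : ∑ j ∈ Finset.Icc 1 (n+4), s' j = P := by
    refine Finset.sum_congr rfl fun j hj => ?_
    simp only [Finset.mem_Icc] at hj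
    exact hs'o j (by omega) (by omega)
  have hsum5 : ∑ j ∈ Finset.Icc 1 (n+5), s j = P := by
    rw [Finset.sum_Icc_succ_top (by omega : 1 ≤ n + 5), hs5, ← hP]
    omega
  have hsum5' : ∑ j ∈ Finset.Icc 1 (n+5), s' j = P + Nat.fib (n+7) := by
    rw [Finset.sum_Icc_succ_top (by omega : 1 ≤ n + 5), hs'5, hP']
  have hsum6 : ∑ j ∈ Finset.Icc 1 (n+6), s j = P + s (n+6) := by
    rw [Finset.sum_Icc_succ_top (by omega : 1 ≤ n + 6), hsum5]
  -- values of the six special terms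
  have t5' : upPot s' (n+5) = Nat.fib (n+2) - P := by
    unfold upPot
    rw [if_neg (by push_neg; exact ⟨by omega, by rw [hs'5]; exact h0⟩)]
    rw [show n+5-3 = n+2 from rfl, show n+5-1 = n+4 from rfl, hP']
  have t6' : upPot s' (n+6) = Nat.fib (n+3) - (P + Nat.fib (n+7)) := by
    unfold upPot
    rw [if_neg (by push_neg; exact ⟨by omega, by rw [hs'6]; exact h6⟩)]
    rw [show n+6-3 = n+3 from rfl, show n+6-1 = n+5 from rfl, hsum5']
  have t7' : upPot s' (n+7) = 0 := by
    unfold upPot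
    rw [if_pos (Or.inr hs'7)]
  have t5 : upPot s (n+5) = 0 := by
    unfold upPot
    rw [if_pos (Or.inr hs5)]
  have t6 : upPot s (n+6) = Nat.fib (n+3) - P := by
    unfold upPot
    rw [if_neg (by push_neg; exact ⟨by omega, h6⟩)]
    rw [show n+6-3 = n+3 from rfl, show n+6-1 = n+5 from rfl, hsum5]
  have t7 : upPot s (n+7) = Nat.fib (n+4) - (P + s (n+6)) := by
    unfold upPot
    rw [if_neg (by push_neg; exact ⟨by omega, h7⟩)]
    rw [show n+7-3 = n+4 from rfl, show n+7-1 = n+6 from rfl, hsum6]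
  -- split the sums
  have hsub : ({n+5, n+6, n+7} : Finset ℕ) ⊆ Finset.Icc 1 k := by
    intro x hx
    simp only [Finset.mem_insert, Finset.mem_singleton] at hx
    simp only [Finset.mem_Icc]
    omega
  unfold fhtngPot
  rw [← Finset.sum_sdiff hsub, ← Finset.sum_sdiff hsub]
  have hcongr : ∑ m ∈ Finset.Icc 1 k \ {n+5, n+6, n+7},
      (upPot s' m + sizePot m (s' m) + nePot s' m)
      = ∑ m ∈ Finset.Icc 1 k \ {n+5, n+6, n+7},
      (upPot s m + sizePot m (s m) + nePot s m) := by
    refine Finset.sum_congr rfl fun m hm => ?_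
    simp only [Finset.mem_sdiff, Finset.mem_Icc, Finset.mem_insert,
      Finset.mem_singleton] at hm
    obtain ⟨⟨h1, hk⟩, hne⟩ := hm
    push_neg at hne
    obtain ⟨hm5, hm6, hm7⟩ := hne
    have hsm : s' m = s m := hs'o m hm5 hm7
    have hup : upPot s' m = upPot s m := by
      unfold upPot
      rw [hsm]
      by_cases hc : m ≤ 2 ∨ s m = 0
      · rw [if_pos hc, if_pos hc]
      · rw [if_neg hc, if_neg hc]
        congr 1
        rcases lt_or_ge m (n+5) with h | h
        · refine Finset.sum_congr rfl fun j hj => ?_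
          simp only [Finset.mem_Icc] at hj
          exact hs'o j (by omega) (by omega)
        · have h8 : n + 8 ≤ m := by omega
          exact sum_swap_aux s s' (n+5) (n+7) (by omega) hs'o
            (by rw [hs'5, hs'7, hs5, hs7]; ring) _
            (by simp only [Finset.mem_Icc]; omega)
            (by simp only [Finset.mem_Icc]; omega)
    have hnep : nePot s' m = nePot s m := by unfold nePot; rw [hsm]
    rw [hsm, hup, hnep]
  rw [hcongr]
  have hsplit : ∀ f : ℕ → ℕ, ∑ m ∈ ({n+5, n+6, n+7} : Finset ℕ), f m
      = f (n+5) + f (n+6) + f (n+7) := by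
    intro f
    rw [Finset.sum_insert (by simp), Finset.sum_pair (by omega)]
    ring
  rw [hsplit, hsplit, t5', t6', t7', t5, t6, t7]
  set C := ∑ m ∈ Finset.Icc 1 k \ {n+5, n+6, n+7},
    (upPot s m + sizePot m (s m) + nePot s m) with hC
  simp only [sizePot, nePot, hs'5, hs'6, hs'7, hs5, hs7, h0, h6, eq_self_iff_true,
    if_true, if_false, ite_true, ite_false]
  clear_value P C
  exact fhtng_arith n C P (s (n+6)) hs6
end

section
/- Let s(1), …, s(k) be natural numbers and let 1 ≤ j ≤ k with s(j) ≥ 1. Let s̄ agree with s everywhere except s̄(j) = s(j) + 1. Then Φ(s̄) ≤ Φ(s) + 1. -/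
/-- The potential-change claim in the Insert lemma (Lemma 4.8): inserting one
element into a nonempty set `S_j` increases the total potential by at most 1. -/
theorem fhtng_insert_potential (k j : ℕ) (hj1 : 1 ≤ j) (hjk : j ≤ k) (s : ℕ → ℕ)
    (hne : 1 ≤ s j)
    (s' : ℕ → ℕ)
    (hs' : ∀ m, s' m = if m = j then s j + 1 else s m) :
    fhtngPot s' k ≤ fhtngPot s k + 1 := by
  unfold fhtngPot
  have hj : j ∈ Finset.Icc 1 k := Finset.mem_Icc.mpr ⟨hj1, hjk⟩
  calc ∑ i ∈ Finset.Icc 1 k, (upPot s' i + sizePot i (s' i) + nePot s' i)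
      ≤ ∑ i ∈ Finset.Icc 1 k,
        ((upPot s i + sizePot i (s i) + nePot s i) + if i = j then 1 else 0) := by
        apply Finset.sum_le_sum
        intro i _
        have hup : upPot s' i ≤ upPot s i := by
          unfold upPot
          have hsum : ∑ m ∈ Finset.Icc 1 (i - 1), s m ≤
              ∑ m ∈ Finset.Icc 1 (i - 1), s' m := by
            apply Finset.sum_le_sum
            intro m _
            rw [hs' m]
            rcases eq_or_ne m j with h | h
            · subst h; rw [if_pos rfl]; omega
            · rw [if_neg h]
          by_cases h2 : i ≤ 2
          · simp [h2]
          · rw [hs' i]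
            rcases eq_or_ne i j with hij | hij
            · subst hij
              rw [if_pos rfl, if_neg (by omega), if_neg (by omega)]
              omega
            · rw [if_neg hij]
              by_cases h0 : s i = 0
              · rw [if_pos (Or.inr h0), if_pos (Or.inr h0)]
              · rw [if_neg (by omega), if_neg (by omega)]
                omega
        have hne' : nePot s' i = nePot s i := by
          unfold nePot
          rw [hs' i]
          rcases eq_or_ne i j with h | h
          · subst h; rw [if_pos rfl, if_neg (by omega), if_neg (by omega)]
          · rw [if_neg h]
        rcases eq_or_ne i j with hij | hij
        · rw [if_pos hij]
          have hsize : sizePot i (s' i) ≤ sizePot i (s i) + 1 := by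
            rw [hs' i, if_pos hij, hij]
            unfold sizePot
            rw [if_neg (by omega), if_neg (by omega)]
            omega
          omega
        · rw [if_neg hij]
          have : s' i = s i := by rw [hs' i, if_neg hij]
          rw [this]
          omega
      _ = (∑ i ∈ Finset.Icc 1 k, (upPot s i + sizePot i (s i) + nePot s i)) + 1 := by
        rw [Finset.sum_add_distrib, Finset.sum_ite_eq' (Finset.Icc 1 k) j (fun _ => 1),
          if_pos hj]
end

section
/- Let s(1), …, s(k) be natural numbers and let 1 ≤ j ≤ k with s(j) ≥ 1. Let s̄ agree with s everywhere except s̄(j) = s(j) − 1. Then Φ(s̄) ≤ Φ(s) + k + 1. -/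
/-- The potential-change claim in the Delete-Min lemma (Lemma 4.9): deleting one
element from a set `S_j` increases the total potential by at most `k + 1`. -/
theorem fhtng_delete_min_potential (k j : ℕ) (hj1 : 1 ≤ j) (hjk : j ≤ k) (s : ℕ → ℕ)
    (hne : 1 ≤ s j)
    (s' : ℕ → ℕ)
    (hs' : ∀ m, s' m = if m = j then s j - 1 else s m) :
    fhtngPot s' k ≤ fhtngPot s k + k + 1 := by

  have key : ∀ i ∈ Finset.Icc 1 k,
      upPot s' i + sizePot i (s' i) + nePot s' i ≤
      (upPot s i + sizePot i (s i) + nePot s i) + 1 := by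
    intro i hi
    simp only [Finset.mem_Icc] at hi
    by_cases hij : i = j
    · subst hij
      have hsi : s' i = s i - 1 := by rw [hs']; simp
      have hup : upPot s' i ≤ upPot s i := by
        unfold upPot
        have hsum : ∑ m ∈ Finset.Icc 1 (i-1), s' m = ∑ m ∈ Finset.Icc 1 (i-1), s m := by
          apply Finset.sum_congr rfl
          intro m hm
          simp only [Finset.mem_Icc] at hm
          rw [hs']
          have hmi : ¬ m = i := by omega
          simp [hmi]
        rw [hsum]
        split_ifs with h1 h2 h2
        · exact le_rfl
        · exact Nat.zero_le _
        · exfalso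
          rcases h2 with h | h
          · exact h1 (Or.inl h)
          · exact h1 (Or.inr (by omega))
        · exact le_rfl
      have hsz : sizePot i (s' i) ≤ sizePot i (s i) + 1 := by
        unfold sizePot
        rw [hsi]
        split_ifs <;> omega
      have hnep : nePot s' i ≤ nePot s i := by
        unfold nePot
        rw [hsi]
        split_ifs <;> omega
      omega
    · have hsi : s' i = s i := by rw [hs']; simp [hij]
      have hup : upPot s' i ≤ upPot s i + 1 := by
        unfold upPot
        have hsum : ∑ m ∈ Finset.Icc 1 (i-1), s m ≤
            (∑ m ∈ Finset.Icc 1 (i-1), s' m) + 1 := by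
          calc ∑ m ∈ Finset.Icc 1 (i-1), s m
              ≤ ∑ m ∈ Finset.Icc 1 (i-1), (s' m + if m = j then 1 else 0) := by
                apply Finset.sum_le_sum
                intro m hm
                rcases eq_or_ne m j with h | h
                · subst h
                  rw [hs']
                  simp
                  omega
                · rw [hs']
                  simp [h]
            _ = (∑ m ∈ Finset.Icc 1 (i-1), s' m) +
                ∑ m ∈ Finset.Icc 1 (i-1), (if m = j then 1 else 0) := by
                rw [Finset.sum_add_distrib]
            _ ≤ (∑ m ∈ Finset.Icc 1 (i-1), s' m) + 1 := by
                gcongr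
                simp [Finset.sum_ite_eq' (Finset.Icc 1 (i-1)) j (fun _ => 1)]
                split_ifs <;> omega
        rw [hsi]
        split_ifs with h1
        · exact Nat.zero_le _
        · omega
      have hnep : nePot s' i = nePot s i := by
        unfold nePot
        rw [hsi]
      rw [hsi] at *
      omega
  calc fhtngPot s' k ≤ ∑ i ∈ Finset.Icc 1 k,
        ((upPot s i + sizePot i (s i) + nePot s i) + 1) := Finset.sum_le_sum key
    _ = fhtngPot s k + k := by
        rw [Finset.sum_add_distrib, Finset.sum_const, smul_eq_mul, mul_one,
          Nat.card_Icc, fhtngPot]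
        omega
    _ ≤ fhtngPot s k + k + 1 := Nat.le_succ _
end

section
/- Let s(1), …, s(ℓ) be natural numbers and let 1 ≤ i ≤ ℓ. Let s̄ agree with s everywhere except s̄(i) = s(i) + 1. Then Φ(s̄) ≤ Φ(s) + 2. -/
/-- The insertion potential `φinsert_i = max(0, s(i) − 5·2^(i−1))`
(natural-number subtraction is truncated). -/
def insPot (s : ℕ → ℕ) (i : ℕ) : ℕ := s i - 5 * 2 ^ (i - 1)

/-- The push potential `φpush_i = ⌊s(i) / 2^i⌋`. -/
def pushPot (s : ℕ → ℕ) (i : ℕ) : ℕ := s i / 2 ^ i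

/-- The pull potential `φpull_i = max(0, 2^(i−1) − (s(1)+⋯+s(i)))`
(natural-number subtraction is truncated). -/
def pullPot (s : ℕ → ℕ) (i : ℕ) : ℕ := 2 ^ (i - 1) - ∑ j ∈ Finset.Icc 1 i, s j

/-- The total potential of a heap with exponentially upper-bounded sets. -/
def expPot (s : ℕ → ℕ) (L : ℕ) : ℕ :=
  ∑ i ∈ Finset.Icc 1 L, (insPot s i + pushPot s i + pullPot s i)

/-- The potential-change claim in the Insert lemma (Lemma 5.2) for heaps with
exponentially upper-bounded sets: adding one element to `S_i` increases the
total potential by at most 2. -/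
theorem exp_insert_potential (ℓ i : ℕ) (hi1 : 1 ≤ i) (hiℓ : i ≤ ℓ) (s : ℕ → ℕ)
    (s' : ℕ → ℕ)
    (hs' : ∀ m, s' m = if m = i then s i + 1 else s m) :
    expPot s' ℓ ≤ expPot s ℓ + 2 := by
  have hle : ∀ m, s m ≤ s' m := by
    intro m; rw [hs' m]; split_ifs with h
    · subst h; omega
    · omega
  have hterm : ∀ j ∈ Finset.Icc 1 ℓ,
      insPot s' j + pushPot s' j + pullPot s' j ≤
      insPot s j + pushPot s j + pullPot s j + (if j = i then 2 else 0) := by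
    intro j _
    have hpull : pullPot s' j ≤ pullPot s j := by
      unfold pullPot
      have : ∑ k ∈ Finset.Icc 1 j, s k ≤ ∑ k ∈ Finset.Icc 1 j, s' k :=
        Finset.sum_le_sum fun k _ => hle k
      omega
    by_cases hji : j = i
    · subst hji
      have h1 : s' j = s j + 1 := by rw [hs' j]; simp
      have hins : insPot s' j ≤ insPot s j + 1 := by unfold insPot; omega
      have hpush : pushPot s' j ≤ pushPot s j + 1 := by
        unfold pushPot
        rw [h1]
        have h2 : 0 < 2 ^ j := by positivity
        calc (s j + 1) / 2 ^ j ≤ (s j + 2 ^ j) / 2 ^ j :=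
              Nat.div_le_div_right (by omega)
          _ = s j / 2 ^ j + 1 := Nat.add_div_right _ h2
      rw [if_pos rfl]
      omega
    · have h1 : s' j = s j := by rw [hs' j]; simp [hji]
      simp only [if_neg hji]
      unfold insPot pushPot
      rw [h1]
      omega
  calc expPot s' ℓ ≤ ∑ j ∈ Finset.Icc 1 ℓ,
        (insPot s j + pushPot s j + pullPot s j + (if j = i then 2 else 0)) :=
        Finset.sum_le_sum hterm
    _ = expPot s ℓ + ∑ j ∈ Finset.Icc 1 ℓ, (if j = i then 2 else 0) := by
        rw [Finset.sum_add_distrib]; rfl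
    _ = expPot s ℓ + 2 := by
        rw [Finset.sum_ite_eq' (Finset.Icc 1 ℓ) i (fun _ => 2)]
        simp [Finset.mem_Icc, hi1, hiℓ]
end

section
/- Let s(1), …, s(ℓ) be natural numbers and let 1 ≤ i ≤ j ≤ ℓ with s(j) ≥ 1. Let s̄ be obtained from s by decreasing s(j) by one and increasing s(i) by one (if i = j then s̄ = s). Then Φ(s̄) ≤ Φ(s) + 2. -/
/-- The potential-change claim in the Decrease-Key lemma (Lemma 5.3) for heaps
with exponentially upper-bounded sets: moving one element from `S_j` to `S_i`
with `i ≤ j` increases the total potential by at most 2. -/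
theorem exp_decrease_key_potential (ℓ i j : ℕ) (hi1 : 1 ≤ i) (hij : i ≤ j)
    (hjℓ : j ≤ ℓ) (s : ℕ → ℕ) (hne : 1 ≤ s j)
    (s' : ℕ → ℕ)
    (hs' : ∀ m, s' m =
      if m = i then (if i = j then s i else s i + 1)
      else if m = j then s j - 1 else s m) :
    expPot s' ℓ ≤ expPot s ℓ + 2 := by
  rcases eq_or_lt_of_le hij with rfl | hlt
  · -- i = j : s' = s
    have hse : s' = s := by
      funext m
      rw [hs' m]
      by_cases hmi : m = i <;> simp [hmi]
    rw [hse]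
    omega
  · -- i < j
    have hij' : i ≠ j := Nat.ne_of_lt hlt
    -- key sum lemma
    have hsum : ∀ m, (∑ k ∈ Finset.Icc 1 m, s' k) + (if j ≤ m then 1 else 0)
        = (∑ k ∈ Finset.Icc 1 m, s k) + (if i ≤ m then 1 else 0) := by
      intro m
      induction m with
      | zero =>
        rw [Finset.Icc_eq_empty (by omega)]
        simp only [Finset.sum_empty]
        rw [if_neg (by omega : ¬ j ≤ 0), if_neg (by omega : ¬ i ≤ 0)]
      | succ n ih =>
        rw [Finset.sum_Icc_succ_top (by omega : 1 ≤ n + 1),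
            Finset.sum_Icc_succ_top (by omega : 1 ≤ n + 1), hs' (n + 1)]
        by_cases h1 : n + 1 = i
        · simp only [h1, if_pos rfl, if_neg hij']
          have : ¬ j ≤ i := by omega
          have : ¬ j ≤ i - 1 := by omega
          split_ifs at ih ⊢ <;> omega
        · by_cases h2 : n + 1 = j
          · simp only [if_neg h1, h2, if_pos rfl]
            split_ifs at ih ⊢ <;> omega
          · simp only [if_neg h1, if_neg h2]
            split_ifs at ih ⊢ <;> omega
    have hsum_le : ∀ m, (∑ k ∈ Finset.Icc 1 m, s k) ≤ ∑ k ∈ Finset.Icc 1 m, s' k := by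
      intro m
      have := hsum m
      split_ifs at this <;> omega
    -- termwise bound
    have hterm : ∀ m ∈ Finset.Icc 1 ℓ,
        insPot s' m + pushPot s' m + pullPot s' m
        ≤ insPot s m + pushPot s m + pullPot s m + (if m = i then 2 else 0) := by
      intro m _
      have hpull : pullPot s' m ≤ pullPot s m :=
        Nat.sub_le_sub_left (hsum_le m) _
      by_cases h1 : m = i
      · subst h1
        have hs'i : s' m = s m + 1 := by rw [hs' m]; simp [hij']
        have hins : insPot s' m ≤ insPot s m + 1 := by
          unfold insPot; rw [hs'i]; omega
        have hpush : pushPot s' m ≤ pushPot s m + 1 := by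
          unfold pushPot
          rw [hs'i]
          calc (s m + 1) / 2 ^ m ≤ (s m + 2 ^ m) / 2 ^ m :=
                Nat.div_le_div_right (by have := Nat.one_le_two_pow (n := m); omega)
            _ = s m / 2 ^ m + 1 := Nat.add_div_right _ (Nat.pow_pos (by norm_num))
        simp only [if_pos rfl, if_true]
        omega
      · have hle : s' m ≤ s m := by
          rw [hs' m]
          simp only [if_neg h1]
          by_cases h2 : m = j
          · subst h2; simp
          · rw [if_neg h2]
        have hins : insPot s' m ≤ insPot s m := by unfold insPot; omega
        have hpush : pushPot s' m ≤ pushPot s m := Nat.div_le_div_right hle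
        simp only [if_neg h1]
        omega
    have hiℓ : i ∈ Finset.Icc 1 ℓ := Finset.mem_Icc.mpr ⟨hi1, le_trans hij hjℓ⟩
    calc expPot s' ℓ
        ≤ ∑ m ∈ Finset.Icc 1 ℓ,
            (insPot s m + pushPot s m + pullPot s m + (if m = i then 2 else 0)) :=
          Finset.sum_le_sum hterm
      _ = expPot s ℓ + ∑ m ∈ Finset.Icc 1 ℓ, (if m = i then 2 else 0) := by
          rw [Finset.sum_add_distrib]; rfl
      _ = expPot s ℓ + 2 := by
          rw [Finset.sum_ite_eq' (Finset.Icc 1 ℓ) i (fun _ => 2), if_pos hiℓ]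
end

section
/- Let 1 ≤ i < m ≤ k and let s(1), …, s(k) be natural numbers with s(i) = 3·2^i, with 2^j ≤ s(j) < 3·2^j for all i < j < m, and with s(m) < 2^m. Let s̄ be defined by s̄(i) = 0, s̄(j) = s(j−1) for i < j < m, s̄(m) = s(m) + s(m−1), and s̄(j) = s(j) for all other indices j. Then Φ(s̄) ≤ Φ(s) + 3 + i − m (as integers). -/
private lemma sum_Icc_shift (f : ℕ → ℕ) (a b : ℕ) :
    ∑ j ∈ Finset.Icc (a+1) (b+1), f (j-1) = ∑ t ∈ Finset.Icc a b, f t := by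
  rw [← Finset.map_add_right_Icc a b 1, Finset.sum_map]
  simp

private lemma Icc_one_eq_Ioc (b : ℕ) : Finset.Icc 1 b = Finset.Ioc 0 b := by
  ext x; simp only [Finset.mem_Icc, Finset.mem_Ioc]; omega

private lemma Ioc_pred_eq_Icc (a b : ℕ) (ha : 1 ≤ a) :
    Finset.Ioc (a-1) b = Finset.Icc a b := by
  ext x; simp only [Finset.mem_Icc, Finset.mem_Ioc]; omega

private lemma sum_Icc_bot (f : ℕ → ℕ) (a b : ℕ) (hab : a ≤ b) :
    ∑ t ∈ Finset.Icc a b, f t = f a + ∑ t ∈ Finset.Icc (a+1) b, f t := by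
  rw [← Finset.add_sum_erase _ f (Finset.mem_Icc.2 ⟨le_refl a, hab⟩),
    Finset.Icc_erase_left, ← Ioc_pred_eq_Icc (a+1) b (by omega)]
  simp

private lemma sum_Icc_top (f : ℕ → ℕ) (a b : ℕ) (hb : 1 ≤ b) (hab : a ≤ b) :
    ∑ t ∈ Finset.Icc a b, f t = ∑ t ∈ Finset.Icc a (b-1), f t + f b := by
  conv_lhs => rw [show b = (b-1)+1 by omega]
  rw [Finset.sum_Icc_succ_top (by omega) f, show (b-1)+1 = b by omega]

private lemma div_double_succ (b c : ℕ) (hc : 0 < c) (hb : c ≤ b) :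
    b / (2*c) + 1 ≤ b / c := by
  have h1 : b / (2*c) = b / c / 2 := by
    rw [Nat.div_div_eq_div_mul, mul_comm]
  have h2 : 1 ≤ b / c := (Nat.one_le_div_iff hc).2 hb
  omega

private lemma div_m_case (a b c : ℕ) (hc : 0 < c) (hb : c ≤ b) (ha : a < 2*c) :
    (a + b) / (2*c) ≤ b / c := by
  have h := Nat.div_add_mod b c
  have hr : b % c < c := Nat.mod_lt _ hc
  have hq : 1 ≤ b / c := (Nat.one_le_div_iff hc).2 hb
  have hlt : a + b < (b / c + 1) * (2*c) := by nlinarith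
  have h2 := (Nat.div_lt_iff_lt_mul (by positivity : (0:ℕ) < 2*c)).2 hlt
  omega

/-- The potential-change claim in the push lemma (Lemma 5.4) for heaps with
exponentially upper-bounded sets: a recursive push starting at `S_i` (of size
`3·2^i`), passing through the sets `S_j` for `i < j < m` (each satisfying
`2^j ≤ s(j) < 3·2^j`), and terminating by concatenating into `S_m` (with
`s(m) < 2^m`), changes the potential by at most `−(m−i) + 3`. -/
theorem exp_push_potential (k i m : ℕ) (hi1 : 1 ≤ i) (him : i < m) (hmk : m ≤ k)
    (s : ℕ → ℕ) (hsi : s i = 3 * 2 ^ i)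
    (hmid : ∀ j, i < j → j < m → 2 ^ j ≤ s j ∧ s j < 3 * 2 ^ j)
    (hsm : s m < 2 ^ m)
    (s' : ℕ → ℕ)
    (hs' : ∀ j, s' j =
      if j = i then 0
      else if i < j ∧ j < m then s (j - 1)
      else if j = m then s m + s (m - 1)
      else s j) :
    (expPot s' k : ℤ) ≤ (expPot s k : ℤ) + 3 + (i : ℤ) - (m : ℤ) := by
  have hS : ∀ t, i ≤ t → t < m → 2 ^ t ≤ s t ∧ s t ≤ 3 * 2 ^ t := by
    intro t ht1 ht2
    rcases eq_or_lt_of_le ht1 with h | h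
    · refine ⟨?_, ?_⟩ <;> rw [← h, hsi] <;> nlinarith [Nat.one_le_two_pow (n := i)]
    · exact ⟨(hmid t h ht2).1, (hmid t h ht2).2.le⟩
  have hout : ∀ j, (j < i ∨ m < j) → s' j = s j := by
    intro j hj
    rw [hs', if_neg (by omega), if_neg (by omega), if_neg (by omega)]
  have hmidv : ∀ j, i < j → j < m → s' j = s (j - 1) := by
    intro j h1 h2
    rw [hs', if_neg (by omega), if_pos ⟨h1, h2⟩]
  have hm' : s' m = s m + s (m - 1) := by
    rw [hs', if_neg (by omega), if_neg (by omega), if_pos rfl]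
  have hi' : s' i = 0 := by rw [hs', if_pos rfl]
  have hpow : ∀ t : ℕ, 1 ≤ t → 2 ^ t = 2 * 2 ^ (t - 1) := by
    intro t ht
    conv_lhs => rw [show t = (t-1)+1 by omega]
    ring
  have hmem_i : i ∈ Finset.Icc 1 k := Finset.mem_Icc.2 ⟨hi1, by omega⟩
  -- the sums of sizes over [i, m] agree
  have hmidsum : ∑ t ∈ Finset.Icc i m, s' t = ∑ t ∈ Finset.Icc i m, s t := by
    rw [sum_Icc_bot s' i m him.le, sum_Icc_bot s i m him.le, hi',
      sum_Icc_top s' (i+1) m (by omega) him, sum_Icc_top s (i+1) m (by omega) him, hm']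
    have e3 : ∑ t ∈ Finset.Icc (i+1) (m-1), s' t
        = ∑ t ∈ Finset.Icc i (m-2), s t := by
      rw [show m - 1 = (m-2)+1 by omega, ← sum_Icc_shift s i (m-2)]
      refine Finset.sum_congr rfl fun t ht => ?_
      rw [Finset.mem_Icc] at ht
      exact hmidv t (by omega) (by omega)
    have e4 : ∑ t ∈ Finset.Icc i (m-1), s t
        = ∑ t ∈ Finset.Icc i (m-2), s t + s (m-1) :=
      sum_Icc_top s i (m-1) (by omega) (by omega)
    have e5 : ∑ t ∈ Finset.Icc i (m-1), s t
        = s i + ∑ t ∈ Finset.Icc (i+1) (m-1), s t :=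
      sum_Icc_bot s i (m-1) (by omega)
    rw [e3]
    omega
  -- prefix sums agree from m on
  have hpre : ∀ j, m ≤ j → ∑ t ∈ Finset.Icc 1 j, s' t = ∑ t ∈ Finset.Icc 1 j, s t := by
    intro j hj
    have sp : ∀ (f : ℕ → ℕ), ∑ t ∈ Finset.Icc 1 j, f t
        = (∑ t ∈ Finset.Ioc 0 (i-1), f t + ∑ t ∈ Finset.Icc i m, f t)
          + ∑ t ∈ Finset.Ioc m j, f t := by
      intro f
      rw [Icc_one_eq_Ioc, ← Finset.sum_Ioc_consecutive f (Nat.zero_le m) hj,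
        ← Finset.sum_Ioc_consecutive f (Nat.zero_le (i-1)) (show i-1 ≤ m by omega),
        Ioc_pred_eq_Icc i m hi1]
    rw [sp s', sp s, hmidsum]
    congr 1
    · congr 1
      refine Finset.sum_congr rfl fun t ht => ?_
      rw [Finset.mem_Ioc] at ht
      exact hout t (by omega)
    · refine Finset.sum_congr rfl fun t ht => ?_
      rw [Finset.mem_Ioc] at ht
      exact hout t (by omega)
  -- insert potential bound
  have hins : ∑ j ∈ Finset.Icc 1 k, insPot s' j + 2 ^ (i-1)
      ≤ ∑ j ∈ Finset.Icc 1 k, insPot s j := by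
    rw [← Finset.add_sum_erase _ (insPot s') hmem_i,
      ← Finset.add_sum_erase _ (insPot s) hmem_i]
    have h1 : insPot s' i = 0 := by simp [insPot, hi']
    have h2 : insPot s i = 2 ^ (i-1) := by
      rw [insPot, hsi, hpow i hi1]; ring_nf; omega
    have h3 : ∀ j ∈ (Finset.Icc 1 k).erase i, insPot s' j ≤ insPot s j := by
      intro j hj
      rw [Finset.mem_erase, Finset.mem_Icc] at hj
      rcases Nat.lt_or_ge j i with h | h
      · rw [insPot, insPot, hout j (Or.inl h)]
      rcases Nat.lt_or_ge j m with hjm | hjm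
      · -- i < j < m
        have hij : i < j := by omega
        have hb := (hS (j-1) (by omega) (by omega)).2
        have : insPot s' j = 0 := by
          rw [insPot, hmidv j hij hjm, Nat.sub_eq_zero_of_le]
          have := hpow j (by omega)
          nlinarith [Nat.one_le_two_pow (n := j - 1)]
        omega
      rcases Nat.lt_or_ge m j with h' | h'
      · rw [insPot, insPot, hout j (Or.inr h')]
      · -- j = m
        have hjm' : j = m := by omega
        subst hjm'
        have hb := (hS (j-1) (by omega) (by omega)).2
        have : insPot s' j = 0 := by
          rw [insPot, hm', Nat.sub_eq_zero_of_le]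
          have := hpow j (by omega)
          omega
        omega
    have hsum := Finset.sum_le_sum h3
    omega
  -- pull potential bound
  have hpull : ∑ j ∈ Finset.Icc 1 k, pullPot s' j
      ≤ ∑ j ∈ Finset.Icc 1 k, pullPot s j + 2 ^ (i-1) := by
    rw [← Finset.add_sum_erase _ (pullPot s') hmem_i,
      ← Finset.add_sum_erase _ (pullPot s) hmem_i]
    have h1 : pullPot s' i ≤ 2 ^ (i-1) := Nat.sub_le _ _
    have h3 : ∀ j ∈ (Finset.Icc 1 k).erase i, pullPot s' j ≤ pullPot s j := by
      intro j hj
      rw [Finset.mem_erase, Finset.mem_Icc] at hj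
      have hj1 : 1 ≤ j := hj.2.1
      have zero_case : ∀ v : ℕ, i < j → j ≤ m → s' j = v → 2 ^ (j-1) ≤ v →
          pullPot s' j = 0 := by
        intro v hij hjm hv hvge
        rw [pullPot, Nat.sub_eq_zero_of_le]
        calc 2 ^ (j-1) ≤ s' j := by omega
          _ ≤ ∑ t ∈ Finset.Icc 1 j, s' t :=
            Finset.single_le_sum (fun t _ => Nat.zero_le _)
              (Finset.mem_Icc.2 ⟨hj1, le_refl j⟩)
      rcases Nat.lt_or_ge j i with h | h
      · -- j < i: prefix sums agree
        have : ∑ t ∈ Finset.Icc 1 j, s' t = ∑ t ∈ Finset.Icc 1 j, s t := by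
          refine Finset.sum_congr rfl fun t ht => ?_
          rw [Finset.mem_Icc] at ht
          exact hout t (Or.inl (by omega))
        rw [pullPot, pullPot, this]
      rcases Nat.lt_or_ge j m with hjm | hjm
      · -- i < j < m
        have hij : i < j := by omega
        have hb := (hS (j-1) (by omega) (by omega)).1
        have hz : pullPot s' j = 0 :=
          zero_case (s (j-1)) hij hjm.le (hmidv j hij hjm) hb
        omega
      rcases Nat.lt_or_ge m j with h' | h'
      · -- j > m: prefix sums agree
        rw [pullPot, pullPot, hpre j h'.le]
      · -- j = m
        have hjm' : j = m := by omega
        subst hjm'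
        have hb := (hS (j-1) (by omega) (by omega)).1
        have hz : pullPot s' j = 0 :=
          zero_case (s j + s (j-1)) (by omega) (le_refl j) hm' (by omega)
        omega
    have hsum := Finset.sum_le_sum h3
    omega
  -- push potential bound
  have hpush : ∑ j ∈ Finset.Icc 1 k, pushPot s' j + (m - i)
      ≤ ∑ j ∈ Finset.Icc 1 k, pushPot s j + 1 := by
    have sp : ∀ (f : ℕ → ℕ), ∑ t ∈ Finset.Icc 1 k, f t
        = (∑ t ∈ Finset.Ioc 0 (i-1), f t + ∑ t ∈ Finset.Icc i m, f t)
          + ∑ t ∈ Finset.Ioc m k, f t := by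
      intro f
      rw [Icc_one_eq_Ioc, ← Finset.sum_Ioc_consecutive f (Nat.zero_le m) hmk,
        ← Finset.sum_Ioc_consecutive f (Nat.zero_le (i-1)) (show i-1 ≤ m by omega),
        Ioc_pred_eq_Icc i m hi1]
    rw [sp (pushPot s'), sp (pushPot s)]
    have e1 : ∑ t ∈ Finset.Ioc 0 (i-1), pushPot s' t
        = ∑ t ∈ Finset.Ioc 0 (i-1), pushPot s t := by
      refine Finset.sum_congr rfl fun t ht => ?_
      rw [Finset.mem_Ioc] at ht
      rw [pushPot, pushPot, hout t (Or.inl (by omega))]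
    have e2 : ∑ t ∈ Finset.Ioc m k, pushPot s' t
        = ∑ t ∈ Finset.Ioc m k, pushPot s t := by
      refine Finset.sum_congr rfl fun t ht => ?_
      rw [Finset.mem_Ioc] at ht
      rw [pushPot, pushPot, hout t (Or.inr (by omega))]
    rw [e1, e2]
    have hmain : ∑ t ∈ Finset.Icc i m, pushPot s' t + (m - i)
        ≤ ∑ t ∈ Finset.Icc i m, pushPot s t + 1 := by
      rw [sum_Icc_bot (pushPot s') i m him.le, sum_Icc_bot (pushPot s) i m him.le]
      have hz : pushPot s' i = 0 := by simp [pushPot, hi']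
      -- pointwise key inequality on Icc (i+1) m
      have key : ∀ j ∈ Finset.Icc (i+1) m,
          pushPot s' j + 1 ≤ pushPot s (j-1) + (if j = m then 1 else 0) := by
        intro j hjmem
        rw [Finset.mem_Icc] at hjmem
        have hc : (0:ℕ) < 2 ^ (j-1) := Nat.pow_pos (by omega)
        have hp : 2 ^ j = 2 * 2 ^ (j-1) := hpow j (by omega)
        have hb := hS (j-1) (by omega) (by omega)
        rcases Nat.lt_or_ge j m with hjm | hjm
        · -- middle
          rw [if_neg (by omega), pushPot, pushPot, hmidv j (by omega) hjm, hp]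
          simpa using div_double_succ (s (j-1)) (2 ^ (j-1)) hc hb.1
        · -- j = m
          have hjm' : j = m := by omega
          subst hjm'
          rw [if_pos rfl]
          have : pushPot s' j ≤ pushPot s (j-1) := by
            rw [pushPot, pushPot, hm', hp]
            exact div_m_case (s j) (s (j-1)) _ hc hb.1 (by omega)
          omega
      have hkey := Finset.sum_le_sum key
      rw [Finset.sum_add_distrib, Finset.sum_add_distrib, Finset.sum_const,
        Finset.sum_ite_eq', if_pos (Finset.mem_Icc.2 ⟨by omega, le_refl m⟩),
        Nat.card_Icc, smul_eq_mul, mul_one] at hkey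
      have hshift : ∑ j ∈ Finset.Icc (i+1) m, pushPot s (j-1)
          = ∑ t ∈ Finset.Icc i (m-1), pushPot s t := by
        rw [show m = (m-1)+1 by omega, sum_Icc_shift (pushPot s) i (m-1),
          show (m-1)+1 = m by omega]
      rw [hshift] at hkey
      have hsub : ∑ t ∈ Finset.Icc i (m-1), pushPot s t
          ≤ ∑ t ∈ Finset.Icc i m, pushPot s t :=
        Finset.sum_le_sum_of_subset (Finset.Icc_subset_Icc_right (by omega))
      have hrw : ∑ t ∈ Finset.Icc i m, pushPot s t
          = pushPot s i + ∑ t ∈ Finset.Icc (i+1) m, pushPot s t :=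
        sum_Icc_bot (pushPot s) i m him.le
      omega
    omega
  -- combine
  have hexp : ∀ (u : ℕ → ℕ), expPot u k
      = ∑ j ∈ Finset.Icc 1 k, insPot u j + ∑ j ∈ Finset.Icc 1 k, pushPot u j
        + ∑ j ∈ Finset.Icc 1 k, pullPot u j := by
    intro u
    rw [expPot, Finset.sum_add_distrib, Finset.sum_add_distrib]
  have hfinal : expPot s' k + (m - i) ≤ expPot s k + 1 := by
    rw [hexp s', hexp s]
    omega
  have hcast : (expPot s' k : ℤ) + ((m : ℤ) - (i : ℤ)) ≤ (expPot s k : ℤ) + 1 := by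
    have := Nat.cast_le (α := ℤ) |>.2 hfinal
    push_cast [Nat.cast_sub him.le] at this
    linarith
  linarith
end

section
/- Let s(1), …, s(ℓ) be natural numbers with s(1) ≥ 1, and let s̄ agree with s everywhere except s̄(1) = s(1) − 1. Then Φ(s̄) ≤ Φ(s) + ℓ. -/
/-- The potential-change claim in the Delete-Min lemma (Lemma 5.5) for heaps with
exponentially upper-bounded sets: removing one element from `S_1` increases the
total potential by at most `ℓ`. -/
theorem exp_delete_min_potential (ℓ : ℕ) (s : ℕ → ℕ) (hne : 1 ≤ s 1)
    (s' : ℕ → ℕ)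
    (hs' : ∀ m, s' m = if m = 1 then s 1 - 1 else s m) :
    expPot s' ℓ ≤ expPot s ℓ + ℓ := by
  have hle : ∀ m, s' m ≤ s m := by
    intro m; rw [hs' m]; split_ifs with h
    · subst h; omega
    · exact le_rfl
  have key : ∀ i ∈ Finset.Icc 1 ℓ,
      insPot s' i + pushPot s' i + pullPot s' i ≤
      (insPot s i + pushPot s i + pullPot s i) + 1 := by
    intro i hi
    have h1 : insPot s' i ≤ insPot s i := by
      unfold insPot; exact Nat.sub_le_sub_right (hle i) _
    have h2 : pushPot s' i ≤ pushPot s i := by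
      unfold pushPot; exact Nat.div_le_div_right (hle i)
    have h3 : pullPot s' i ≤ pullPot s i + 1 := by
      unfold pullPot
      have hsum : ∑ j ∈ Finset.Icc 1 i, s j ≤ (∑ j ∈ Finset.Icc 1 i, s' j) + 1 := by
        simp only [Finset.mem_Icc] at hi
        have h1i : 1 ∈ Finset.Icc 1 i := Finset.mem_Icc.mpr ⟨le_refl 1, hi.1⟩
        rw [← Finset.add_sum_erase _ s h1i, ← Finset.add_sum_erase _ s' h1i]
        have heq : ∑ j ∈ (Finset.Icc 1 i).erase 1, s j
            = ∑ j ∈ (Finset.Icc 1 i).erase 1, s' j := by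
          apply Finset.sum_congr rfl
          intro j hj
          rw [hs' j, if_neg (Finset.ne_of_mem_erase hj)]
        rw [heq, hs' 1, if_pos rfl]
        omega
      omega
    omega
  calc expPot s' ℓ ≤ ∑ i ∈ Finset.Icc 1 ℓ, ((insPot s i + pushPot s i + pullPot s i) + 1) :=
        Finset.sum_le_sum key
    _ = expPot s ℓ + ℓ := by
        rw [Finset.sum_add_distrib]
        simp [expPot, Nat.card_Icc]
end

section
/- Let 2 ≤ m ≤ ℓ and let s(1), …, s(ℓ) be natural numbers with s(j) = 0 for all 1 ≤ j < m and s(m) ≥ 1. Let 1 ≤ i < m be such that 2^(i−1) < s(m) and such that either i = m−1 or s(m) ≤ 2^i. Let s̄ be defined by s̄(1) = 1, s̄(j) = 2^(j−2) for 2 ≤ j ≤ i, s̄(i+1) = s(m) − 2^(i−1), s̄(j) = 0 for i+1 < j ≤ m, and s̄(j) = s(j) for all j > m. Then Φ(s̄) ≤ Φ(s) + i + 2 − m − 2^i (as integers). -/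
/-- The potential-change claim in the pull lemma (Lemma 5.6) for heaps with
exponentially upper-bounded sets: when `S_1, …, S_{m-1}` are empty and `S_m` is
nonempty, the recursive pull (swapping `S_m` down to slot `i+1` and then filling
`S_j` with the `2^(j-1)` smallest elements of `S_{j+1}` for `j = i` down to `1`)
changes the potential by at most `i + 2 − m − 2^i`. -/
theorem exp_pull_potential (ℓ m i : ℕ) (hm2 : 2 ≤ m) (hmℓ : m ≤ ℓ)
    (s : ℕ → ℕ)
    (hempty : ∀ j, 1 ≤ j → j < m → s j = 0) (hne : 1 ≤ s m)
    (hi1 : 1 ≤ i) (him : i < m)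
    (hbig : 2 ^ (i - 1) < s m)
    (hmax : i = m - 1 ∨ s m ≤ 2 ^ i)
    (s' : ℕ → ℕ)
    (hs' : ∀ j, s' j =
      if j = 1 then 1
      else if 2 ≤ j ∧ j ≤ i then 2 ^ (j - 2)
      else if j = i + 1 then s m - 2 ^ (i - 1)
      else if j ≤ m then 0
      else s j) :
    (expPot s' ℓ : ℤ) ≤ (expPot s ℓ : ℤ) + (i : ℤ) + 2 - (m : ℤ) - 2 ^ i := by
  have h2pos : ∀ n : ℕ, 1 ≤ 2 ^ n := fun n => Nat.one_le_two_pow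
  have hsm2 : 2 ≤ s m := by have := h2pos (i - 1); omega
  -- prefix sums of s
  have hS0 : ∀ j, j < m → ∑ k ∈ Finset.Icc 1 j, s k = 0 := by
    intro j hj
    apply Finset.sum_eq_zero
    intro k hk
    rw [Finset.mem_Icc] at hk
    exact hempty k hk.1 (lt_of_le_of_lt hk.2 hj)
  have hSm : ∑ k ∈ Finset.Icc 1 m, s k = s m := by
    apply Finset.sum_eq_single_of_mem
    · rw [Finset.mem_Icc]; omega
    · intro k hk hkm
      rw [Finset.mem_Icc] at hk
      exact hempty k hk.1 (by omega)
  -- prefix sums of s'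
  have hP1 : ∀ j, 1 ≤ j → j ≤ i → ∑ k ∈ Finset.Icc 1 j, s' k = 2 ^ (j - 1) := by
    intro j
    induction j with
    | zero => omega
    | succ n ih =>
      intro _ hji
      rcases Nat.eq_zero_or_pos n with hn | hn
      · subst hn
        simp [hs' 1]
      · rw [Finset.sum_Icc_succ_top (by omega), ih (by omega) (by omega), hs' (n+1),
          if_neg (by omega), if_pos (by omega : 2 ≤ n + 1 ∧ n + 1 ≤ i)]
        have hn1 : n - 1 + 1 = n := by omega
        have h2 : (2:ℕ) ^ n = 2 ^ (n-1) * 2 := by rw [← pow_succ, hn1]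
        have e1 : n + 1 - 2 = n - 1 := by omega
        have e2 : n + 1 - 1 = n := by omega
        rw [e1, e2]
        omega
  have hP2 : ∀ j, i + 1 ≤ j → j ≤ m → ∑ k ∈ Finset.Icc 1 j, s' k = s m := by
    intro j
    induction j with
    | zero => omega
    | succ n ih =>
      intro h1 h2
      rcases Nat.lt_or_ge i n with hn | hn
      · rw [Finset.sum_Icc_succ_top (by omega), ih (by omega) (by omega), hs' (n+1),
          if_neg (by omega), if_neg (by omega), if_neg (by omega), if_pos (by omega)]
        omega
      · have : n = i := by omega
        subst this
        rw [Finset.sum_Icc_succ_top (by omega), hP1 n (by omega) le_rfl, hs' (n+1),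
          if_neg (by omega), if_neg (by omega), if_pos rfl]
        omega
  have hPm : ∀ j, m ≤ j → ∑ k ∈ Finset.Icc 1 j, s' k = ∑ k ∈ Finset.Icc 1 j, s k := by
    intro j hj
    induction j, hj using Nat.le_induction with
    | base => rw [hP2 m (by omega) le_rfl, hSm]
    | succ n hn ih =>
      rw [Finset.sum_Icc_succ_top (by omega), Finset.sum_Icc_succ_top (by omega), ih, hs' (n+1),
        if_neg (by omega), if_neg (by omega), if_neg (by omega), if_neg (by omega)]
  -- small potentials for s'
  have hs'low : ∀ j, 1 ≤ j → j ≤ i → s' j ≤ 2 ^ (j - 1) := by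
    intro j h1 h2
    rw [hs' j]
    rcases Nat.eq_or_lt_of_le h1 with h | h
    · rw [if_pos h.symm]; exact h2pos _
    · rw [if_neg (by omega), if_pos (by omega)]
      exact Nat.pow_le_pow_right (by norm_num) (by omega)
  have hlt2 : ∀ j : ℕ, 1 ≤ j → (2:ℕ) ^ (j-1) < 2 ^ j := by
    intro j hj
    exact Nat.pow_lt_pow_right (by norm_num) (by omega)
  have hzero_low : ∀ j, 1 ≤ j → j ≤ i →
      insPot s' j + pushPot s' j + pullPot s' j = 0 := by
    intro j h1 h2
    have hle := hs'low j h1 h2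
    have hlt := hlt2 j h1
    have hins : insPot s' j = 0 := by unfold insPot; omega
    have hpush : pushPot s' j = 0 := by
      unfold pushPot; exact Nat.div_eq_of_lt (by omega)
    have hpull : pullPot s' j = 0 := by
      unfold pullPot; rw [hP1 j h1 h2]; omega
    omega
  have hflow : ∀ j, 1 ≤ j → j < m →
      insPot s j + pushPot s j + pullPot s j = 2 ^ (j - 1) := by
    intro j h1 h2
    have hsj : s j = 0 := hempty j h1 h2
    have hpull : pullPot s j = 2 ^ (j-1) := by
      unfold pullPot; rw [hS0 j h2]
      have := h2pos (j-1); omega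
    have hins : insPot s j = 0 := by unfold insPot; omega
    have hpush : pushPot s j = 0 := by unfold pushPot; rw [hsj]; simp
    omega
  -- geometric sums
  have hgeo : ∀ k : ℕ, ∑ j ∈ Finset.Icc 1 k, 2 ^ (j - 1) = 2 ^ k - 1 := by
    intro k
    induction k with
    | zero => simp
    | succ n ih =>
      rw [Finset.sum_Icc_succ_top (by omega), ih]
      have h1 : (2:ℕ)^(n+1) = 2^n * 2 := pow_succ 2 n
      have h2 := h2pos n
      simp only [Nat.add_sub_cancel]
      omega
  have hpow : ∀ k, i ≤ k → 2^i + 2*(k-i) ≤ 2^k := by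
    intro k hk
    induction k, hk using Nat.le_induction with
    | base => simp
    | succ n hn ih =>
      have h1 : (2:ℕ)^(n+1) = 2^n * 2 := pow_succ 2 n
      have h2 : 2 ≤ (2:ℕ)^n := by
        calc (2:ℕ) = 2^1 := rfl
        _ ≤ 2^n := Nat.pow_le_pow_right (by norm_num) (by omega)
      omega
  have hgeo2 : ∀ k, i ≤ k → ∑ j ∈ Finset.Ioc i k, (2^(j-1) - 2) = 2^k - 2^i - 2*(k-i) := by
    intro k hk
    induction k, hk using Nat.le_induction with
    | base => simp
    | succ n hn ih =>
      rw [Finset.sum_Ioc_succ_top (by omega), ih]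
      have h1 : (2:ℕ)^(n+1) = 2^n * 2 := pow_succ 2 n
      have h2 : 2 ≤ (2:ℕ)^n := by
        calc (2:ℕ) = 2^1 := rfl
        _ ≤ 2^n := Nat.pow_le_pow_right (by norm_num) (by omega)
      have h3 := hpow n hn
      simp only [Nat.add_sub_cancel]
      omega
  -- splitting sums
  have hsplit : ∀ (g : ℕ → ℕ) (a b : ℕ), a ≤ b →
      ∑ j ∈ Finset.Icc 1 b, g j = ∑ j ∈ Finset.Icc 1 a, g j + ∑ j ∈ Finset.Ioc a b, g j := by
    intro g a b hab
    rw [show (1:ℕ) = 0 + 1 from rfl, Finset.Icc_add_one_left_eq_Ioc, Finset.Icc_add_one_left_eq_Ioc,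
      ← Finset.sum_Ioc_consecutive g (Nat.zero_le a) hab]
  have hhigh : ∀ j, m < j →
      insPot s' j + pushPot s' j + pullPot s' j = insPot s j + pushPot s j + pullPot s j := by
    intro j hj
    have hsj : s' j = s j := by
      rw [hs' j, if_neg (by omega), if_neg (by omega), if_neg (by omega), if_neg (by omega)]
    unfold insPot pushPot pullPot
    rw [hsj, hPm j (by omega)]
  -- the sum of s over Icc 1 m
  have hA1 : ∑ j ∈ Finset.Icc 1 (m-1), (insPot s j + pushPot s j + pullPot s j)
      = 2^(m-1) - 1 := by
    rw [← hgeo (m-1)]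
    apply Finset.sum_congr rfl
    intro j hj
    rw [Finset.mem_Icc] at hj
    exact hflow j hj.1 (by omega)
  have hA : ∑ j ∈ Finset.Icc 1 m, (insPot s j + pushPot s j + pullPot s j)
      = 2^(m-1) - 1 + (insPot s m + pushPot s m + pullPot s m) := by
    have hm' : m = m - 1 + 1 := by omega
    rw [hm', Finset.sum_Icc_succ_top (by omega), ← hm', hA1]
  have hpullm : pullPot s m = 2^(m-1) - s m := by
    unfold pullPot; rw [hSm]
  -- main inequality on Icc 1 m
  have hmain : ∑ j ∈ Finset.Icc 1 m, (insPot s' j + pushPot s' j + pullPot s' j) + m + 2^i ≤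
      ∑ j ∈ Finset.Icc 1 m, (insPot s j + pushPot s j + pullPot s j) + i + 2 := by
    by_cases hsm : s m ≤ 2^i
    · -- case A
      have hmid : ∀ j, i+1 ≤ j → j ≤ m →
          insPot s' j + pushPot s' j + pullPot s' j = 2^(j-1) - s m := by
        intro j h1 h2
        have h2i : (2:ℕ)^i = 2^(i-1) * 2 := by
          rw [← pow_succ]; congr 1; omega
        have hsj : s' j ≤ 2^(i-1) := by
          rw [hs' j]
          rcases eq_or_ne j (i+1) with h | h
          · rw [if_neg (by omega), if_neg (by omega), if_pos h]; omega
          · rw [if_neg (by omega), if_neg (by omega), if_neg h, if_pos (by omega)]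
            exact Nat.zero_le _
        have hij : (2:ℕ)^(i-1) ≤ 2^(j-1) := Nat.pow_le_pow_right (by norm_num) (by omega)
        have hlt := hlt2 j (by omega)
        have hins : insPot s' j = 0 := by unfold insPot; omega
        have hpush : pushPot s' j = 0 := by
          unfold pushPot; exact Nat.div_eq_of_lt (by omega)
        have hpull : pullPot s' j = 2^(j-1) - s m := by
          unfold pullPot; rw [hP2 j h1 h2]
        omega
      have hA'1 : ∑ j ∈ Finset.Icc 1 i, (insPot s' j + pushPot s' j + pullPot s' j) = 0 := by
        apply Finset.sum_eq_zero
        intro j hj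
        rw [Finset.mem_Icc] at hj
        exact hzero_low j hj.1 hj.2
      have hA'2 : ∑ j ∈ Finset.Ioc i m, (insPot s' j + pushPot s' j + pullPot s' j)
          = ∑ j ∈ Finset.Ioc i m, (2^(j-1) - s m) := by
        apply Finset.sum_congr rfl
        intro j hj
        rw [Finset.mem_Ioc] at hj
        exact hmid j hj.1 hj.2
      have hA' : ∑ j ∈ Finset.Icc 1 m, (insPot s' j + pushPot s' j + pullPot s' j)
          = ∑ j ∈ Finset.Ioc i (m-1), (2^(j-1) - s m) + (2^(m-1) - s m) := by
        rw [hsplit _ i m (le_of_lt him), hA'1, hA'2]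
        have hm' : m = m - 1 + 1 := by omega
        rw [hm', Finset.sum_Ioc_succ_top (by omega), ← hm']
        simp
      have hbnd : ∑ j ∈ Finset.Ioc i (m-1), (2^(j-1) - s m)
          ≤ ∑ j ∈ Finset.Ioc i (m-1), (2^(j-1) - 2) := by
        apply Finset.sum_le_sum
        intro j hj
        rw [Finset.mem_Ioc] at hj
        have : 2 ≤ (2:ℕ)^(j-1) := by
          calc (2:ℕ) = 2^1 := rfl
          _ ≤ 2^(j-1) := Nat.pow_le_pow_right (by norm_num) (by omega)
        omega
      have hg2 := hgeo2 (m-1) (by omega)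
      have hp := hpow (m-1) (by omega)
      have hmm : (2:ℕ)^(m-1) ≥ 1 := h2pos _
      rw [hA', hA, hpullm]
      omega
    · -- case B: i = m - 1
      have hieq : i = m - 1 := by
        rcases hmax with h | h
        · exact h
        · omega
      have hs'm : s' m = s m - 2^(i-1) := by
        rw [hs' m, if_neg (by omega), if_neg (by omega), if_pos (by omega)]
      have hins : insPot s' m ≤ insPot s m := by
        unfold insPot; rw [hs'm]
        have := h2pos (i-1); have := h2pos (m-1); omega
      have hpush : pushPot s' m ≤ pushPot s m := by
        unfold pushPot; rw [hs'm]
        exact Nat.div_le_div_right (Nat.sub_le _ _)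
      have hpull : pullPot s' m = pullPot s m := by
        unfold pullPot; rw [hP2 m (by omega) le_rfl, hSm]
      have hA'1 : ∑ j ∈ Finset.Icc 1 (m-1), (insPot s' j + pushPot s' j + pullPot s' j) = 0 := by
        apply Finset.sum_eq_zero
        intro j hj
        rw [Finset.mem_Icc] at hj
        exact hzero_low j hj.1 (by omega)
      have hA' : ∑ j ∈ Finset.Icc 1 m, (insPot s' j + pushPot s' j + pullPot s' j)
          = insPot s' m + pushPot s' m + pullPot s' m := by
        have hm' : m = m - 1 + 1 := by omega
        rw [hm', Finset.sum_Icc_succ_top (by omega), ← hm', hA'1]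
        omega
      have hmm : (2:ℕ)^(m-1) ≥ 1 := h2pos _
      have h2i : (2:ℕ)^i = 2^(m-1) := by rw [hieq]
      have hfm : insPot s' m + pushPot s' m + pullPot s' m ≤
          insPot s m + pushPot s m + pullPot s m := by omega
      rw [hA', hA, h2i]
      omega
  -- assemble
  have e1 : ∑ j ∈ Finset.Icc 1 ℓ, (insPot s' j + pushPot s' j + pullPot s' j)
      = ∑ j ∈ Finset.Icc 1 m, (insPot s' j + pushPot s' j + pullPot s' j)
        + ∑ j ∈ Finset.Ioc m ℓ, (insPot s' j + pushPot s' j + pullPot s' j) :=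
    hsplit _ m ℓ hmℓ
  have e2 : ∑ j ∈ Finset.Icc 1 ℓ, (insPot s j + pushPot s j + pullPot s j)
      = ∑ j ∈ Finset.Icc 1 m, (insPot s j + pushPot s j + pullPot s j)
        + ∑ j ∈ Finset.Ioc m ℓ, (insPot s j + pushPot s j + pullPot s j) :=
    hsplit _ m ℓ hmℓ
  have e3 : ∑ j ∈ Finset.Ioc m ℓ, (insPot s' j + pushPot s' j + pullPot s' j)
      = ∑ j ∈ Finset.Ioc m ℓ, (insPot s j + pushPot s j + pullPot s j) :=
    Finset.sum_congr rfl (fun j hj => hhigh j (Finset.mem_Ioc.mp hj).1)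
  have hfin : expPot s' ℓ + m + 2^i ≤ expPot s ℓ + i + 2 := by
    unfold expPot
    rw [e1, e2, e3]
    omega
  have h2c : (((2:ℕ)^i : ℕ) : ℤ) = (2:ℤ)^i := by push_cast; ring
  omega
end
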